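/- arXiv:2307.16491 — 2 statements merged into one kernel-verified Lean document; each statement's English description precedes it below -/
import Mathlib

section
/- Let N ≥ 1, p > 1 and α ∈ (0,1). There exists a constant γ₁ = γ₁(N,p,α) > 0 with the following property: if μ is a nonnegative Radon measure on ℝ^N, 0 < T < ∞, and the time-fractional problem ∂_t^α u − Δu = u^p, u(0) = μ possesses a nonnegative solution on [0,T]×ℝ^N, then sup_{z∈ℝ^N} μ(B(z,σ)) ≤ γ₁ σ^{N − 2/(p−1)} for every σ ∈ (0, T^{α/2}]. -/
open MeasureTheory Real Set Metric
open scoped ENNReal NNReal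

noncomputable section

/-- Euclidean space ℝ^N. -/
abbrev RN (N : ℕ) := EuclideanSpace ℝ (Fin N)

/-- The Gaussian heat kernel `G(t,x) = (4πt)^{-N/2} exp(-|x|²/(4t))` on ℝ^N. -/
def heatKernel (N : ℕ) (t : ℝ) (x : RN N) : ℝ :=
  (4 * Real.pi * t) ^ (-(N : ℝ) / 2) * Real.exp (-‖x‖ ^ 2 / (4 * t))

/-- `(e^{tΔ}μ)(x) = ∫_{ℝ^N} G(t, x-y) dμ(y)` for a nonnegative measure `μ`. -/
def heatSG (N : ℕ) (t : ℝ) (μ : Measure (RN N)) (x : RN N) : ℝ≥0∞ :=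
  ∫⁻ y, ENNReal.ofReal (heatKernel N t (x - y)) ∂μ

/-- `P_α(t)μ(x) = ∫_0^∞ h_α(θ) (e^{t^α θ Δ}μ)(x) dθ`. -/
def Pop (N : ℕ) (α : ℝ) (h : ℝ → ℝ) (t : ℝ) (μ : Measure (RN N)) (x : RN N) : ℝ≥0∞ :=
  ∫⁻ θ in Ioi (0 : ℝ), ENNReal.ofReal (h θ) * heatSG N (t ^ α * θ) μ x

/-- `S_α(t)f(x) = ∫_0^∞ θ h_α(θ) (e^{t^α θ Δ}f)(x) dθ` for a nonnegative function `f`. -/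
def Sop (N : ℕ) (α : ℝ) (h : ℝ → ℝ) (t : ℝ) (f : RN N → ℝ≥0∞) (x : RN N) : ℝ≥0∞ :=
  ∫⁻ θ in Ioi (0 : ℝ), ENNReal.ofReal (θ * h θ) *
    ∫⁻ y, ENNReal.ofReal (heatKernel N (t ^ α * θ) (x - y)) * f y

/-- `h = h_α` is an admissible probability density on `(0,∞)`: it is measurable, positive,
has the moments `∫_0^∞ θ^δ h(θ) dθ = Γ(1+δ)/Γ(1+αδ)` for `δ > -1`, and its Laplace-type
transforms are the Mittag-Leffler functions `E_{α,1}` and `E_{α,α}` at nonpositive arguments. -/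
structure IsAdmissibleDensity (α : ℝ) (h : ℝ → ℝ) : Prop where
  measurable : Measurable h
  pos : ∀ θ ∈ Ioi (0 : ℝ), 0 < h θ
  moment : ∀ δ : ℝ, -1 < δ →
    ∫ θ in Ioi (0 : ℝ), θ ^ δ * h θ = Real.Gamma (1 + δ) / Real.Gamma (1 + α * δ)
  laplace_one : ∀ z : ℝ, z ≤ 0 →
    ∫ θ in Ioi (0 : ℝ), h θ * Real.exp (z * θ) = ∑' k : ℕ, z ^ k / Real.Gamma (α * k + 1)
  laplace_two : ∀ z : ℝ, z ≤ 0 →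
    α * ∫ θ in Ioi (0 : ℝ), θ * h θ * Real.exp (z * θ) = ∑' k : ℕ, z ^ k / Real.Gamma (α * k + α)

/-- `u` is a (nonnegative) solution of `∂_t^α u - Δu = u^p`, `u(0) = μ` on `[0,T] × ℝ^N`:
for a.e. `t ∈ (0,T]` and a.e. `x`, `u(t,x) < ∞` and
`u(t,x) = [P_α(t)μ](x) + α ∫_0^t (t-s)^{α-1} [S_α(t-s) u(s)^p](x) ds`. -/
def IsSolution (N : ℕ) (α p : ℝ) (h : ℝ → ℝ) (μ : Measure (RN N)) (T : ℝ)
    (u : ℝ → RN N → ℝ≥0∞) : Prop :=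
  Measurable (Function.uncurry u) ∧
  ∀ᵐ t ∂(volume.restrict (Ioc (0 : ℝ) T)), ∀ᵐ x ∂(volume : Measure (RN N)),
    u t x < ∞ ∧
    u t x = Pop N α h t μ x +
      ENNReal.ofReal α * ∫⁻ s in Ioo (0 : ℝ) t,
        ENNReal.ofReal ((t - s) ^ (α - 1)) * Sop N α h (t - s) (fun y => u s y ^ p) x

/-- The lifespan `T_α[μ]`: the supremum (in `ℝ≥0∞`) of all `T > 0` such that the problem
possesses a solution on `[0,T] × ℝ^N`; it is `0` if no such `T` exists. -/
def lifespan (N : ℕ) (α p : ℝ) (h : ℝ → ℝ) (μ : Measure (RN N)) : ℝ≥0∞ :=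
  ⨆ (T : ℝ) (_ : 0 < T ∧ ∃ u, IsSolution N α p h μ T u), ENNReal.ofReal T

namespace Aux

lemma one_add_mul_pos {α δ : ℝ} (hα : α ∈ Ioo (0:ℝ) 1) (hδ : -1 < δ) : 0 < 1 + α * δ := by
  rcases le_or_gt 0 δ with hd | hd
  · nlinarith [hα.1]
  · nlinarith [hα.2]

lemma gammaQuot_pos {α δ : ℝ} (hα : α ∈ Ioo (0:ℝ) 1) (hδ : -1 < δ) :
    0 < Real.Gamma (1 + δ) / Real.Gamma (1 + α * δ) :=
  div_pos (Real.Gamma_pos_of_pos (by linarith)) (Real.Gamma_pos_of_pos (one_add_mul_pos hα hδ))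

lemma moment_lint {α : ℝ} (hα : α ∈ Ioo (0:ℝ) 1) {h : ℝ → ℝ} (hh : IsAdmissibleDensity α h)
    {δ : ℝ} (hδ : -1 < δ) :
    ∫⁻ θ in Ioi (0:ℝ), ENNReal.ofReal (θ ^ δ * h θ) =
      ENNReal.ofReal (Real.Gamma (1 + δ) / Real.Gamma (1 + α * δ)) := by
  have hnn : 0 ≤ᶠ[ae (volume.restrict (Ioi (0:ℝ)))] fun θ => θ ^ δ * h θ := by
    filter_upwards [ae_restrict_mem measurableSet_Ioi] with θ hθ
    exact mul_nonneg (Real.rpow_nonneg (le_of_lt hθ) _) (le_of_lt (hh.pos θ hθ))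
  have hint : IntegrableOn (fun θ => θ ^ δ * h θ) (Ioi 0) := by
    by_contra hni
    have h0 := integral_undef (μ := volume.restrict (Ioi (0:ℝ))) hni
    rw [hh.moment δ hδ] at h0
    exact absurd h0 (ne_of_gt (gammaQuot_pos hα hδ))
  rw [← hh.moment δ hδ]
  exact (ofReal_integral_eq_lintegral_ofReal hint hnn).symm

/-- constants depending only on α -/
def Ca (α : ℝ) : ℝ := Real.Gamma (1 + (-(1/2))) / Real.Gamma (1 + α * (-(1/2)))
def Cb (α : ℝ) : ℝ := Real.Gamma (1 + 1) / Real.Gamma (1 + α * 1)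
def aC (α : ℝ) : ℝ := (1/(4*Ca α+1))^2
def bC (α : ℝ) : ℝ := 4*Cb α + aC α + 1

lemma Ca_pos {α : ℝ} (hα : α ∈ Ioo (0:ℝ) 1) : 0 < Ca α := gammaQuot_pos hα (by norm_num)
lemma Cb_pos {α : ℝ} (hα : α ∈ Ioo (0:ℝ) 1) : 0 < Cb α := gammaQuot_pos hα (by norm_num)
lemma aC_pos {α : ℝ} (hα : α ∈ Ioo (0:ℝ) 1) : 0 < aC α := by
  have := Ca_pos hα; unfold aC; positivity
lemma aC_lt_bC {α : ℝ} (hα : α ∈ Ioo (0:ℝ) 1) : aC α < bC α := by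
  have := Cb_pos hα; unfold bC; nlinarith

lemma lint_h_one {α : ℝ} (hα : α ∈ Ioo (0:ℝ) 1) {h : ℝ → ℝ} (hh : IsAdmissibleDensity α h) :
    ∫⁻ θ in Ioi (0:ℝ), ENNReal.ofReal (h θ) = 1 := by
  have := moment_lint hα hh (δ := 0) (by norm_num)
  simp only [Real.rpow_zero, one_mul] at this
  rw [this]
  norm_num [Real.Gamma_one]

lemma lint_h_small {α : ℝ} (hα : α ∈ Ioo (0:ℝ) 1) {h : ℝ → ℝ} (hh : IsAdmissibleDensity α h) :
    ∫⁻ θ in Ioc (0:ℝ) (aC α), ENNReal.ofReal (h θ) ≤ ENNReal.ofReal (1/4) := by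
  set a := aC α with ha_def
  have hapos := aC_pos hα
  have hCa := Ca_pos hα
  have hsq : Real.sqrt a = 1/(4*Ca α+1) := by
    rw [ha_def]; unfold aC
    rw [Real.sqrt_sq (by positivity)]
  calc ∫⁻ θ in Ioc (0:ℝ) a, ENNReal.ofReal (h θ)
      ≤ ∫⁻ θ in Ioc (0:ℝ) a, ENNReal.ofReal (Real.sqrt a) * ENNReal.ofReal (θ ^ (-(1/2):ℝ) * h θ) := by
        apply lintegral_mono_ae
        filter_upwards [ae_restrict_mem measurableSet_Ioc] with θ hθ
        rw [← ENNReal.ofReal_mul (Real.sqrt_nonneg _)]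
        apply ENNReal.ofReal_le_ofReal
        have hθ0 : (0:ℝ) < θ := hθ.1
        have hmul : (1:ℝ) ≤ Real.sqrt a * θ ^ (-(1/2):ℝ) := by
          rw [Real.rpow_neg hθ0.le, ← div_eq_mul_inv,
            le_div_iff₀ (Real.rpow_pos_of_pos hθ0 _), one_mul]
          calc θ ^ ((1:ℝ)/2) = Real.sqrt θ := (Real.sqrt_eq_rpow θ).symm
          _ ≤ Real.sqrt a := Real.sqrt_le_sqrt hθ.2
        calc h θ = 1 * h θ := (one_mul _).symm
        _ ≤ (Real.sqrt a * θ ^ (-(1/2):ℝ)) * h θ := by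
            apply mul_le_mul_of_nonneg_right hmul (le_of_lt (hh.pos θ hθ.1))
        _ = Real.sqrt a * (θ ^ (-(1/2):ℝ) * h θ) := by ring
    _ = ENNReal.ofReal (Real.sqrt a) * ∫⁻ θ in Ioc (0:ℝ) a, ENNReal.ofReal (θ ^ (-(1/2):ℝ) * h θ) :=
        lintegral_const_mul' _ _ ENNReal.ofReal_ne_top
    _ ≤ ENNReal.ofReal (Real.sqrt a) * ∫⁻ θ in Ioi (0:ℝ), ENNReal.ofReal (θ ^ (-(1/2):ℝ) * h θ) := by
        gcongr
        exact Ioc_subset_Ioi_self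
    _ = ENNReal.ofReal (Real.sqrt a) * ENNReal.ofReal (Ca α) := by
        rw [moment_lint hα hh (by norm_num : (-1:ℝ) < -(1/2))]; rfl
    _ ≤ ENNReal.ofReal (1/4) := by
        rw [← ENNReal.ofReal_mul (Real.sqrt_nonneg _)]
        apply ENNReal.ofReal_le_ofReal
        rw [hsq]
        rw [div_mul_eq_mul_div, one_mul, div_le_iff₀ (by positivity)]
        nlinarith

lemma lint_h_large {α : ℝ} (hα : α ∈ Ioo (0:ℝ) 1) {h : ℝ → ℝ} (hh : IsAdmissibleDensity α h) :
    ∫⁻ θ in Ici (bC α), ENNReal.ofReal (h θ) ≤ ENNReal.ofReal (1/4) := by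
  set b := bC α with hb_def
  have hbpos : 0 < b := lt_trans (aC_pos hα) (aC_lt_bC hα)
  have hCb := Cb_pos hα
  calc ∫⁻ θ in Ici b, ENNReal.ofReal (h θ)
      ≤ ∫⁻ θ in Ici b, ENNReal.ofReal (1/b) * ENNReal.ofReal (θ ^ (1:ℝ) * h θ) := by
        apply lintegral_mono_ae
        filter_upwards [ae_restrict_mem measurableSet_Ici] with θ hθ
        rw [← ENNReal.ofReal_mul (by positivity)]
        apply ENNReal.ofReal_le_ofReal
        have hθ0 : (0:ℝ) < θ := lt_of_lt_of_le hbpos hθ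
        rw [Real.rpow_one]
        have hbθ : 1 ≤ (1/b) * θ := by
          rw [div_mul_eq_mul_div, one_mul, le_div_iff₀ hbpos, one_mul]; exact hθ
        calc h θ = 1 * h θ := (one_mul _).symm
        _ ≤ ((1/b) * θ) * h θ := mul_le_mul_of_nonneg_right hbθ (le_of_lt (hh.pos θ hθ0))
        _ = (1/b) * (θ * h θ) := by ring
    _ = ENNReal.ofReal (1/b) * ∫⁻ θ in Ici b, ENNReal.ofReal (θ ^ (1:ℝ) * h θ) :=
        lintegral_const_mul' _ _ ENNReal.ofReal_ne_top
    _ ≤ ENNReal.ofReal (1/b) * ∫⁻ θ in Ioi (0:ℝ), ENNReal.ofReal (θ ^ (1:ℝ) * h θ) := by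
        gcongr
    _ = ENNReal.ofReal (1/b) * ENNReal.ofReal (Cb α) := by
        rw [moment_lint hα hh (by norm_num : (-1:ℝ) < 1)]; rfl
    _ ≤ ENNReal.ofReal (1/4) := by
        rw [← ENNReal.ofReal_mul (by positivity)]
        apply ENNReal.ofReal_le_ofReal
        rw [div_mul_eq_mul_div, one_mul, div_le_iff₀ hbpos]
        rw [hb_def]; unfold bC
        nlinarith [aC_pos hα]

lemma lint_h_interval {α : ℝ} (hα : α ∈ Ioo (0:ℝ) 1) {h : ℝ → ℝ} (hh : IsAdmissibleDensity α h) :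
    ENNReal.ofReal (1/2) ≤ ∫⁻ θ in Ioo (aC α) (bC α), ENNReal.ofReal (h θ) := by
  set a := aC α; set b := bC α
  have hsub : Ioi (0:ℝ) ⊆ (Ioc (0:ℝ) a ∪ Ioo a b) ∪ Ici b := by
    intro θ hθ
    rcases le_or_gt θ a with h1 | h1
    · exact Or.inl (Or.inl ⟨hθ, h1⟩)
    · rcases lt_or_ge θ b with h2 | h2
      · exact Or.inl (Or.inr ⟨h1, h2⟩)
      · exact Or.inr h2
  have h1 : (1:ℝ≥0∞) = ∫⁻ θ in Ioi (0:ℝ), ENNReal.ofReal (h θ) := (lint_h_one hα hh).symm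
  have hle : (1:ℝ≥0∞) ≤ (∫⁻ θ in Ioc (0:ℝ) a, ENNReal.ofReal (h θ)) +
      (∫⁻ θ in Ioo a b, ENNReal.ofReal (h θ)) + (∫⁻ θ in Ici b, ENNReal.ofReal (h θ)) := by
    rw [h1]
    calc ∫⁻ θ in Ioi (0:ℝ), ENNReal.ofReal (h θ)
        ≤ ∫⁻ θ in (Ioc (0:ℝ) a ∪ Ioo a b) ∪ Ici b, ENNReal.ofReal (h θ) :=
          lintegral_mono' (Measure.restrict_mono hsub le_rfl) le_rfl
      _ ≤ (∫⁻ θ in Ioc (0:ℝ) a ∪ Ioo a b, ENNReal.ofReal (h θ)) +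
            ∫⁻ θ in Ici b, ENNReal.ofReal (h θ) := lintegral_union_le _ _ _
      _ ≤ (∫⁻ θ in Ioc (0:ℝ) a, ENNReal.ofReal (h θ)) +
            (∫⁻ θ in Ioo a b, ENNReal.ofReal (h θ)) + ∫⁻ θ in Ici b, ENNReal.ofReal (h θ) := by
          gcongr; exact lintegral_union_le _ _ _
  have hsmall := lint_h_small hα hh
  have hlarge := lint_h_large hα hh
  have h2 : (1:ℝ≥0∞) ≤ (∫⁻ θ in Ioo a b, ENNReal.ofReal (h θ)) + ENNReal.ofReal (1/2) := by
    calc (1:ℝ≥0∞) ≤ _ := hle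
    _ ≤ ENNReal.ofReal (1/4) + (∫⁻ θ in Ioo a b, ENNReal.ofReal (h θ)) + ENNReal.ofReal (1/4) := by
        gcongr
    _ = (∫⁻ θ in Ioo a b, ENNReal.ofReal (h θ)) + (ENNReal.ofReal (1/4) + ENNReal.ofReal (1/4)) := by
        ring
    _ = (∫⁻ θ in Ioo a b, ENNReal.ofReal (h θ)) + ENNReal.ofReal (1/2) := by
        rw [← ENNReal.ofReal_add (by norm_num) (by norm_num)]; norm_num
  have h3 : (1:ℝ≥0∞) - ENNReal.ofReal (1/2) ≤ ∫⁻ θ in Ioo a b, ENNReal.ofReal (h θ) :=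
    tsub_le_iff_right.mpr h2
  calc ENNReal.ofReal (1/2) = ENNReal.ofReal (1 - 1/2) := by norm_num
  _ = ENNReal.ofReal 1 - ENNReal.ofReal (1/2) := ENNReal.ofReal_sub _ (by norm_num)
  _ = (1:ℝ≥0∞) - ENNReal.ofReal (1/2) := by rw [ENNReal.ofReal_one]
  _ ≤ _ := h3

lemma lint_th_interval {α : ℝ} (hα : α ∈ Ioo (0:ℝ) 1) {h : ℝ → ℝ} (hh : IsAdmissibleDensity α h) :
    ENNReal.ofReal (aC α * (1/2)) ≤ ∫⁻ θ in Ioo (aC α) (bC α), ENNReal.ofReal (θ * h θ) := by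
  have hapos := aC_pos hα
  calc ENNReal.ofReal (aC α * (1/2)) = ENNReal.ofReal (aC α) * ENNReal.ofReal (1/2) :=
        ENNReal.ofReal_mul hapos.le
  _ ≤ ENNReal.ofReal (aC α) * ∫⁻ θ in Ioo (aC α) (bC α), ENNReal.ofReal (h θ) := by
      gcongr; exact lint_h_interval hα hh
  _ = ∫⁻ θ in Ioo (aC α) (bC α), ENNReal.ofReal (aC α) * ENNReal.ofReal (h θ) :=
      (lintegral_const_mul' _ _ ENNReal.ofReal_ne_top).symm
  _ ≤ ∫⁻ θ in Ioo (aC α) (bC α), ENNReal.ofReal (θ * h θ) := by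
      apply lintegral_mono_ae
      filter_upwards [ae_restrict_mem measurableSet_Ioo] with θ hθ
      rw [← ENNReal.ofReal_mul hapos.le]
      exact ENNReal.ofReal_le_ofReal
        (mul_le_mul_of_nonneg_right hθ.1.le (le_of_lt (hh.pos θ (lt_trans hapos hθ.1))))

/-- Pointwise heat-kernel lower bound for comparable times. -/
lemma kernel_pointwise_lb (N : ℕ) {a b s σ : ℝ} (ha : 0 < a) (hb : 0 < b) (hσ : 0 < σ)
    (w : RN N) (hs1 : a * σ^2 / 2 ≤ s) (hs2 : s ≤ b * σ^2) (hw : ‖w‖ ≤ 2*σ) :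
    (4*Real.pi*b) ^ (-(N:ℝ)/2) * Real.exp (-(2/a)) * σ ^ (-(N:ℝ)) ≤ heatKernel N s w := by
  have hspos : 0 < s := lt_of_lt_of_le (by positivity) hs1
  have hπ := Real.pi_pos
  unfold heatKernel
  have h1 : (4*Real.pi*b) ^ (-(N:ℝ)/2) * σ ^ (-(N:ℝ)) ≤ (4*Real.pi*s) ^ (-(N:ℝ)/2) := by
    have key : (4*Real.pi*(b*σ^2)) ^ (-(N:ℝ)/2) ≤ (4*Real.pi*s) ^ (-(N:ℝ)/2) := by
      apply Real.rpow_le_rpow_of_nonpos (by positivity) (by nlinarith)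
      have : (0:ℝ) ≤ (N:ℝ) := Nat.cast_nonneg N
      linarith
    have e1 : (4*Real.pi*(b*σ^2)) ^ (-(N:ℝ)/2) = (4*Real.pi*b) ^ (-(N:ℝ)/2) * σ ^ (-(N:ℝ)) := by
      rw [show 4*Real.pi*(b*σ^2) = (4*Real.pi*b) * σ^2 by ring]
      rw [Real.mul_rpow (by positivity) (by positivity)]
      congr 1
      rw [show (σ:ℝ)^2 = σ ^ (2:ℝ) by rw [← Real.rpow_natCast σ 2]; norm_num]
      rw [← Real.rpow_mul hσ.le]
      rw [show (2:ℝ) * (-(N:ℝ)/2) = -(N:ℝ) by ring]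
    rw [← e1]; exact key
  have h2 : Real.exp (-(2/a)) ≤ Real.exp (-‖w‖^2 / (4*s)) := by
    apply Real.exp_le_exp.mpr
    rw [neg_div, neg_le_neg_iff]
    have hw2 : ‖w‖^2 ≤ 4*σ^2 := by nlinarith [norm_nonneg w]
    calc ‖w‖^2 / (4*s) ≤ (4*σ^2) / (4*(a*σ^2/2)) :=
          div_le_div₀ (by positivity) hw2 (by positivity) (by linarith)
    _ = 2/a := by field_simp
  calc (4*Real.pi*b) ^ (-(N:ℝ)/2) * Real.exp (-(2/a)) * σ ^ (-(N:ℝ))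
      = ((4*Real.pi*b) ^ (-(N:ℝ)/2) * σ ^ (-(N:ℝ))) * Real.exp (-(2/a)) := by ring
  _ ≤ (4*Real.pi*s) ^ (-(N:ℝ)/2) * Real.exp (-‖w‖^2 / (4*s)) := by
      apply mul_le_mul h1 h2 (Real.exp_pos _).le (by positivity)

/-- Lower bound for the integral of the heat kernel over a small ball. -/
lemma kernel_ball_lb (N : ℕ) (hN : 1 ≤ N) {s R : ℝ} (hs : 0 < s) (hR : 0 < R) (hsR : s ≤ R^2) (x : RN N) :
    ENNReal.ofReal ((4*Real.pi) ^ (-(N:ℝ)/2) * Real.exp (-(1/4))) * volume (ball (0:RN N) 1)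
      ≤ ∫⁻ y in ball x R, ENNReal.ofReal (heatKernel N s (x - y)) := by
  haveI : Nonempty (Fin N) := ⟨⟨0, hN⟩⟩
  haveI : Nontrivial (RN N) := inferInstance
  have hπ := Real.pi_pos
  have key : (4*Real.pi*s) ^ (-(N:ℝ)/2) * (Real.sqrt s ^ N) = (4*Real.pi) ^ (-(N:ℝ)/2) := by
    rw [Real.mul_rpow (by positivity) hs.le]
    rw [show Real.sqrt s ^ N = s ^ ((N:ℝ)/2) by
      rw [Real.sqrt_eq_rpow, ← Real.rpow_natCast (s ^ ((1:ℝ)/2)) N, ← Real.rpow_mul hs.le]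
      congr 1; ring]
    rw [mul_assoc, ← Real.rpow_add hs]
    ring_nf
    rw [Real.rpow_zero, mul_one]
  have hsub : ball x (Real.sqrt s) ⊆ ball x R := by
    apply ball_subset_ball
    calc Real.sqrt s ≤ Real.sqrt (R^2) := Real.sqrt_le_sqrt hsR
    _ = R := Real.sqrt_sq hR.le
  have hpt : ∀ y ∈ ball x (Real.sqrt s),
      ENNReal.ofReal ((4*Real.pi*s) ^ (-(N:ℝ)/2) * Real.exp (-(1/4)))
        ≤ ENNReal.ofReal (heatKernel N s (x - y)) := by
    intro y hy
    apply ENNReal.ofReal_le_ofReal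
    unfold heatKernel
    have hxy : ‖x - y‖^2 ≤ s := by
      have h1 : ‖x - y‖ < Real.sqrt s := by
        rw [mem_ball, dist_comm] at hy
        rwa [← dist_eq_norm]
      nlinarith [norm_nonneg (x - y), Real.sq_sqrt hs.le, Real.sqrt_nonneg s]
    apply mul_le_mul_of_nonneg_left _ (by positivity)
    apply Real.exp_le_exp.mpr
    have hq : ‖x-y‖^2/(4*s) ≤ 1/4 := by
      rw [div_le_div_iff₀ (by positivity) (by norm_num)]
      nlinarith
    rw [neg_div]
    exact neg_le_neg hq
  calc ENNReal.ofReal ((4*Real.pi) ^ (-(N:ℝ)/2) * Real.exp (-(1/4))) * volume (ball (0:RN N) 1)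
      = ENNReal.ofReal ((4*Real.pi*s) ^ (-(N:ℝ)/2) * Real.exp (-(1/4))) *
          (ENNReal.ofReal (Real.sqrt s ^ N) * volume (ball (0:RN N) 1)) := by
        rw [← mul_assoc, ← ENNReal.ofReal_mul (by positivity)]
        congr 2
        conv_rhs => rw [mul_right_comm, key]
  _ = ENNReal.ofReal ((4*Real.pi*s) ^ (-(N:ℝ)/2) * Real.exp (-(1/4))) *
        volume (ball x (Real.sqrt s)) := by
      rw [Measure.addHaar_ball volume x (Real.sqrt_nonneg s), finrank_euclideanSpace_fin]
  _ = ∫⁻ _ in ball x (Real.sqrt s), ENNReal.ofReal ((4*Real.pi*s) ^ (-(N:ℝ)/2) * Real.exp (-(1/4))) :=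
      (setLIntegral_const _ _).symm
  _ ≤ ∫⁻ y in ball x (Real.sqrt s), ENNReal.ofReal (heatKernel N s (x - y)) := by
      apply lintegral_mono_ae
      filter_upwards [ae_restrict_mem measurableSet_ball] with y hy
      exact hpt y hy
  _ ≤ ∫⁻ y in ball x R, ENNReal.ofReal (heatKernel N s (x - y)) :=
      lintegral_mono' (Measure.restrict_mono hsub le_rfl) le_rfl

/-- Scalar blow-up lemma: a sequence satisfying `a_{k+1} = C q^k a_k^p` with `a_0` above an
explicit threshold is unbounded. -/
lemma blowup_seq {p C q : ℝ} (hp : 1 < p) (hC : 0 < C) (hq : q ∈ Ioo (0:ℝ) 1) :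
    ∃ κ : ℝ, 0 < κ ∧ ∀ aseq : ℕ → ℝ, (∀ k, aseq (k+1) = C * q^k * (aseq k) ^ p) →
      κ ≤ aseq 0 → ∀ M : ℝ, ∃ k, M ≤ aseq k := by
  set d : ℝ := (-Real.log q) / (p - 1) with hd
  set e : ℝ := (d - Real.log C) / (p - 1) with he
  refine ⟨Real.exp e + 1, by positivity, fun aseq hrec h0 M => ?_⟩
  have hp1 : (0:ℝ) < p - 1 := by linarith
  have hd0 : 0 ≤ d := by
    apply div_nonneg _ (by linarith)
    have : Real.log q < 0 := Real.log_neg hq.1 hq.2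
    linarith
  have hpos : ∀ k, 0 < aseq k := by
    intro k
    induction k with
    | zero => nlinarith [Real.exp_pos e]
    | succ n ih =>
        rw [hrec n]
        exact mul_pos (mul_pos hC (pow_pos hq.1 n)) (Real.rpow_pos_of_pos ih p)
  set c : ℝ := Real.log (aseq 0) - e with hc
  have hc0 : 0 < c := by
    have h1 : e < Real.log (Real.exp e + 1) := by
      calc e = Real.log (Real.exp e) := (Real.log_exp e).symm
      _ < Real.log (Real.exp e + 1) := Real.log_lt_log (Real.exp_pos e) (by linarith)
    have h2 : Real.log (Real.exp e + 1) ≤ Real.log (aseq 0) :=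
      Real.log_le_log (by positivity) h0
    rw [hc]; linarith
  have hlog : ∀ k, c * p ^ k + d * k + e ≤ Real.log (aseq k) := by
    intro k
    induction k with
    | zero =>
        simp only [pow_zero, Nat.cast_zero, mul_one, mul_zero, add_zero, hc]
        linarith
    | succ n ih =>
        have hrw : Real.log (aseq (n+1)) = Real.log C + n * Real.log q + p * Real.log (aseq n) := by
          rw [hrec n, Real.log_mul (ne_of_gt (mul_pos hC (pow_pos hq.1 n)))
              (ne_of_gt (Real.rpow_pos_of_pos (hpos n) p)),
            Real.log_mul (ne_of_gt hC) (ne_of_gt (pow_pos hq.1 n)),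
            Real.log_pow, Real.log_rpow (hpos n)]
        have key : Real.log C + (n:ℝ) * Real.log q + p * (c * p ^ n + d * (n:ℝ) + e)
            = c * p ^ (n+1) + d * ((n:ℝ) + 1) + e := by
          rw [he, hd]
          field_simp
          ring
        have mono : p * (c * p ^ n + d * (n:ℝ) + e) ≤ p * Real.log (aseq n) :=
          mul_le_mul_of_nonneg_left ih (by linarith)
        rw [hrw]
        push_cast
        linarith
  have htend : Filter.Tendsto (fun k : ℕ => c * p ^ k + e) Filter.atTop Filter.atTop := by
    apply Filter.tendsto_atTop_add_const_right
    exact (tendsto_pow_atTop_atTop_of_one_lt hp).const_mul_atTop hc0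
  obtain ⟨k, hk⟩ := (htend.eventually_ge_atTop M).exists
  refine ⟨k, ?_⟩
  have h1 : c * p ^ k + e ≤ Real.log (aseq k) := by
    have := hlog k
    nlinarith [mul_nonneg hd0 (Nat.cast_nonneg (α := ℝ) k)]
  have h2 : Real.log (aseq k) ≤ aseq k := by
    nlinarith [Real.log_le_sub_one_of_pos (hpos k)]
  linarith

end Aux


set_option maxHeartbeats 2000000 in
/-- necessary condition for solvability (Theorem 1.1, first part). -/
theorem necessary_condition_general
    (N : ℕ) (hN : 1 ≤ N) (p α : ℝ) (hp : 1 < p) (hα : α ∈ Ioo (0 : ℝ) 1) :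
    ∃ γ₁ : ℝ, 0 < γ₁ ∧
      ∀ h : ℝ → ℝ, IsAdmissibleDensity α h →
      ∀ μ : Measure (RN N), IsLocallyFiniteMeasure μ →
      ∀ T : ℝ, 0 < T →
      ∀ u : ℝ → RN N → ℝ≥0∞, IsSolution N α p h μ T u →
      ∀ σ ∈ Ioc (0 : ℝ) (T ^ (α / 2)), ∀ z : RN N,
        μ (ball z σ) ≤ ENNReal.ofReal (γ₁ * σ ^ ((N : ℝ) - 2 / (p - 1))) := by
  have hα0 : (0:ℝ) < α := hα.1
  have hα1 : α < 1 := hα.2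
  have hπ := Real.pi_pos
  haveI : Nonempty (Fin N) := ⟨⟨0, hN⟩⟩
  -- constants depending only on N, p, α
  obtain ⟨a, ha_def⟩ : ∃ _x : ℝ, _x = Aux.aC α := ⟨_, rfl⟩
  obtain ⟨b, hb_def⟩ : ∃ _x : ℝ, _x = Aux.bC α := ⟨_, rfl⟩
  have ha : 0 < a := by rw [ha_def]; exact Aux.aC_pos hα
  have hab : a < b := by rw [ha_def, hb_def]; exact Aux.aC_lt_bC hα
  have hb : 0 < b := lt_trans ha hab
  obtain ⟨c₁, hc₁_def⟩ : ∃ _x : ℝ, _x = (4*Real.pi*b) ^ (-(N:ℝ)/2) * Real.exp (-(2/a)) := ⟨_, rfl⟩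
  have hc₁ : 0 < c₁ := by rw [hc₁_def]; positivity
  obtain ⟨κ2, hκ2_def⟩ : ∃ _x : ℝ, _x = (4*Real.pi) ^ (-(N:ℝ)/2) * Real.exp (-(1/4)) *
      (volume (ball (0:RN N) 1)).toReal := ⟨_, rfl⟩
  have hvol0 : 0 < volume (ball (0:RN N) 1) := measure_ball_pos volume _ one_pos
  have hvolt : volume (ball (0:RN N) 1) < ⊤ := measure_ball_lt_top
  have hκ2 : 0 < κ2 := by
    have h1 : 0 < (volume (ball (0:RN N) 1)).toReal := ENNReal.toReal_pos hvol0.ne' hvolt.ne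
    rw [hκ2_def]; positivity
  obtain ⟨δ₀, hδ₀_def⟩ : ∃ _x : ℝ, _x = min (3/16) ((9/(256*b)) ^ (α⁻¹)) := ⟨_, rfl⟩
  have hδ₀ : 0 < δ₀ := by
    rw [hδ₀_def]
    apply lt_min (by norm_num)
    positivity
  have hδ₀' : δ₀ ≤ 3/16 := by rw [hδ₀_def]; exact min_le_left _ _
  obtain ⟨r0, hr0_def⟩ : ∃ _x : ℝ, _x = (1/4) * ((16:ℝ) ^ (-α⁻¹)) := ⟨_, rfl⟩
  have hr0 : 0 < r0 := by rw [hr0_def]; positivity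
  have hr0' : r0 ≤ 1/4 := by
    have h16 : ((16:ℝ) ^ (-α⁻¹)) ≤ 1 :=
      Real.rpow_le_one_of_one_le_of_nonpos (by norm_num) (by simp [le_of_lt, inv_pos.mpr hα0])
    rw [hr0_def]
    nlinarith [Real.rpow_pos_of_pos (show (0:ℝ) < 16 by norm_num) (-α⁻¹)]
  have hr01 : r0 < 1 := lt_of_le_of_lt hr0' (by norm_num)
  obtain ⟨q, hq_def⟩ : ∃ _x : ℝ, _x = r0 ^ α := ⟨_, rfl⟩
  have hq : q ∈ Ioo (0:ℝ) 1 := by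
    rw [hq_def]
    exact ⟨Real.rpow_pos_of_pos hr0 α, Real.rpow_lt_one hr0.le hr01 hα0⟩
  obtain ⟨CC, hCC_def⟩ : ∃ _x : ℝ, _x = α * (a * (1/2) * κ2) * δ₀ ^ α := ⟨_, rfl⟩
  have hCC : 0 < CC := by
    have := Real.rpow_pos_of_pos hδ₀ α
    rw [hCC_def]; positivity
  obtain ⟨κ, hκ, hblow⟩ := Aux.blowup_seq hp hCC hq
  refine ⟨2*κ/c₁, by positivity, ?_⟩
  intro h hh μ hμ T hT u hu σ hσmem z
  obtain ⟨hσ, hσT⟩ := hσmem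
  -- the ball has finite measure
  have hμball : μ (ball z σ) < ⊤ :=
    lt_of_le_of_lt (measure_mono ball_subset_closedBall)
      (IsCompact.measure_lt_top (isCompact_closedBall z σ))
  obtain ⟨m, hm_def⟩ : ∃ _x : ℝ, _x = (μ (ball z σ)).toReal := ⟨_, rfl⟩
  have hm0 : 0 ≤ m := by rw [hm_def]; exact ENNReal.toReal_nonneg
  rw [show μ (ball z σ) = ENNReal.ofReal m by
    rw [hm_def, ENNReal.ofReal_toReal hμball.ne]]
  refine ENNReal.ofReal_le_ofReal ?_
  by_contra hcon
  push_neg at hcon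
  -- geometric setup
  obtain ⟨τ, hτ_def⟩ : ∃ _x : ℝ, _x = σ ^ (2/α) := ⟨_, rfl⟩
  have hτ : 0 < τ := by rw [hτ_def]; exact Real.rpow_pos_of_pos hσ _
  have hτT : τ ≤ T := by
    rw [hτ_def]
    calc σ ^ (2/α) ≤ (T ^ (α/2)) ^ (2/α) :=
          Real.rpow_le_rpow hσ.le hσT (by positivity)
    _ = T ^ ((α/2) * (2/α)) := (Real.rpow_mul hT.le _ _).symm
    _ = T := by
        rw [show (α/2) * (2/α) = 1 by field_simp, Real.rpow_one]
  have hτα : τ ^ α = σ ^ (2:ℝ) := by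
    rw [hτ_def, ← Real.rpow_mul hσ.le, div_mul_cancel₀ _ (ne_of_gt hα0)]
  have hσ2 : (0:ℝ) < σ ^ (2:ℝ) := Real.rpow_pos_of_pos hσ _
  obtain ⟨L, hL_def⟩ : ∃ _x : ℕ → ℝ, _x = fun k => τ * (3/4) - τ * (1/4)^(k+1) := ⟨_, rfl⟩
  obtain ⟨ρ, hρ_def⟩ : ∃ _x : ℕ → ℝ, _x = fun k => σ/4 + σ/4 * (1/4)^k := ⟨_, rfl⟩
  obtain ⟨δs, hδs_def⟩ : ∃ _x : ℕ → ℝ, _x = fun k => δ₀ * r0^k := ⟨_, rfl⟩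
  have hLeq : ∀ k, L k = τ * (3/4) - τ * (1/4:ℝ)^(k+1) := fun k => by rw [hL_def]
  have hLlow : ∀ k, τ/2 ≤ L k := by
    intro k
    have h1 : ((1:ℝ)/4)^(k+1) ≤ (1/4) := by
      calc ((1:ℝ)/4)^(k+1) ≤ ((1:ℝ)/4)^1 :=
            pow_le_pow_of_le_one (by norm_num) (by norm_num) (Nat.one_le_iff_ne_zero.mpr (by simp))
      _ = 1/4 := pow_one _
    have h2 : τ * (1/4:ℝ)^(k+1) ≤ τ * (1/4) := mul_le_mul_of_nonneg_left h1 hτ.le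
    rw [hLeq k]; linarith
  have hLτ : ∀ k, L k < τ := by
    intro k
    have h1 : (0:ℝ) < τ * (1/4:ℝ)^(k+1) := by positivity
    rw [hLeq k]; linarith
  have hWsub : ∀ k, Ioc (L k) τ ⊆ Ioc 0 T := by
    intro k t ht
    have h0 : (0:ℝ) < L k := lt_of_lt_of_le (by linarith) (hLlow k)
    exact ⟨lt_trans h0 ht.1, le_trans ht.2 hτT⟩
  have hρeq : ∀ k, ρ k = σ/4 + σ/4 * (1/4:ℝ)^k := fun k => by rw [hρ_def]
  have hρpos : ∀ k, 0 < ρ k := by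
    intro k; rw [hρeq k]; positivity
  have hρσ : ∀ k, ρ k ≤ σ := by
    intro k
    have h1 : ((1:ℝ)/4)^k ≤ 1 := pow_le_one₀ (by norm_num) (by norm_num)
    have h2 : σ/4 * (1/4:ℝ)^k ≤ σ/4 * 1 := mul_le_mul_of_nonneg_left h1 (by linarith)
    rw [hρeq k]; linarith
  have hρlow : ∀ k, σ/4 ≤ ρ k := by
    intro k
    have h1 : (0:ℝ) ≤ σ/4 * (1/4:ℝ)^k := by positivity
    rw [hρeq k]; linarith
  have hρgap : ∀ k, ρ k - ρ (k+1) = (3*σ/16) * (1/4)^k := by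
    intro k
    rw [hρeq k, hρeq (k+1), pow_succ]
    ring
  have hδseq : ∀ k, δs k = δ₀ * r0^k := fun k => by rw [hδs_def]
  have hδspos : ∀ k, 0 < δs k := by
    intro k; rw [hδseq k]; positivity
  have hδsgap : ∀ k, δs k ≤ (3/16) * (1/4)^k := by
    intro k
    have h1 : r0^k ≤ (1/4:ℝ)^k := pow_le_pow_left₀ hr0.le hr0' k
    have h2 : δ₀ * r0^k ≤ (3/16) * r0^k :=
      mul_le_mul_of_nonneg_right hδ₀' (pow_nonneg hr0.le k)
    have h3 : (3/16:ℝ) * r0^k ≤ (3/16) * (1/4)^k :=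
      mul_le_mul_of_nonneg_left h1 (by norm_num)
    rw [hδseq k]; linarith
  have hLgap : ∀ k, L (k+1) - L k = τ * ((3/16) * (1/4)^k) := by
    intro k
    rw [hLeq k, hLeq (k+1)]
    rw [show ((1:ℝ)/4)^(k+1+1) = (1/4)^(k+1) * (1/4) from pow_succ _ _]
    rw [show ((1:ℝ)/4)^(k+1) = (1/4)^k * (1/4) from pow_succ _ _]
    ring
  have eσ : σ ^ (2:ℝ) = σ^2 := by
    rw [show (2:ℝ) = ((2:ℕ):ℝ) by norm_num, Real.rpow_natCast]
  -- kernel smallness for the induction step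
  have hq16 : q ≤ 1/16 := by
    have h1 : r0 ≤ (16:ℝ)^(-α⁻¹) := by
      rw [hr0_def]
      nlinarith [Real.rpow_pos_of_pos (by norm_num : (0:ℝ)<16) (-α⁻¹)]
    calc q = r0^α := hq_def
    _ ≤ ((16:ℝ)^(-α⁻¹))^α := Real.rpow_le_rpow hr0.le h1 hα0.le
    _ = (16:ℝ)^((-α⁻¹)*α) := (Real.rpow_mul (by norm_num) _ _).symm
    _ = 1/16 := by
        rw [show (-α⁻¹)*α = (-1:ℝ) by field_simp, Real.rpow_neg_one]
        norm_num
  have hδα : ∀ k, (δs k * τ) ^ α = δ₀ ^ α * q^k * σ ^ (2:ℝ) := by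
    intro k
    have h1 : ((r0 ^ k : ℝ)) ^ α = q ^ k := by
      rw [hq_def]
      rw [← Real.rpow_natCast r0 k]
      rw [← Real.rpow_natCast (r0 ^ α) k]
      rw [← Real.rpow_mul hr0.le, ← Real.rpow_mul hr0.le, mul_comm]
    calc (δs k * τ)^α = (δ₀ * r0^k * τ)^α := by rw [hδseq k]
    _ = (δ₀ * r0^k)^α * τ^α := Real.mul_rpow (by positivity) hτ.le
    _ = δ₀^α * (r0^k)^α * τ^α := by rw [Real.mul_rpow hδ₀.le (pow_nonneg hr0.le k)]
    _ = δ₀^α * q^k * σ ^ (2:ℝ) := by rw [h1, hτα]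
  have hsmall : ∀ k, (δs k * τ) ^ α * b ≤ (ρ k - ρ (k+1))^2 := by
    intro k
    have e1 : δ₀^α ≤ 9/(256*b) := by
      have h1 : δ₀ ≤ (9/(256*b)) ^ α⁻¹ := by rw [hδ₀_def]; exact min_le_right _ _
      calc δ₀^α ≤ ((9/(256*b)) ^ α⁻¹)^α := Real.rpow_le_rpow hδ₀.le h1 hα0.le
      _ = 9/(256*b) := Real.rpow_inv_rpow (by positivity) (ne_of_gt hα0)
    have e2k : q^k ≤ ((1:ℝ)/16)^k := pow_le_pow_left₀ hq.1.le hq16 k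
    have epow : ((1:ℝ)/16)^k = (((1:ℝ)/4)^k)^2 := by
      calc ((1:ℝ)/16)^k = (((1:ℝ)/4)^2)^k := by norm_num
      _ = (((1:ℝ)/4)^k)^2 := pow_right_comm _ _ _
    rw [hδα k, hρgap k, eσ]
    have hδab : δ₀^α * q^k ≤ (9/(256*b)) * ((1:ℝ)/16)^k :=
      mul_le_mul e1 e2k (pow_nonneg hq.1.le k) (by positivity)
    calc δ₀^α * q^k * σ^2 * b ≤ (9/(256*b)) * ((1:ℝ)/16)^k * σ^2 * b := by
          apply mul_le_mul_of_nonneg_right _ hb.le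
          exact mul_le_mul_of_nonneg_right hδab (sq_nonneg σ)
    _ = (3*σ/16 * (1/4)^k)^2 := by
        rw [epow]
        field_simp
        ring
  -- the (δ τ)^α expansion
  -- the sequence
  obtain ⟨aseq, haseq0, haseqS⟩ : ∃ f : ℕ → ℝ, f 0 = 1/2 * c₁ * σ ^ (-(N:ℝ)) * m ∧
      ∀ k, f (k+1) = CC * q^k * σ ^ (2:ℝ) * (f k)^p :=
    ⟨fun k => Nat.rec (1/2 * c₁ * σ ^ (-(N:ℝ)) * m) (fun k ak => CC * q^k * σ ^ (2:ℝ) * ak^p) k,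
      rfl, fun k => rfl⟩
  have haseq_nn : ∀ k, 0 ≤ aseq k := by
    intro k
    induction k with
    | zero =>
        rw [haseq0]
        exact mul_nonneg (mul_nonneg (mul_nonneg (by norm_num) hc₁.le)
          (Real.rpow_nonneg hσ.le _)) hm0
    | succ n ih =>
        rw [haseqS n]
        exact mul_nonneg (mul_nonneg (mul_nonneg hCC.le (pow_nonneg hq.1.le n)) hσ2.le)
          (Real.rpow_nonneg ih p)
  -- the main induction
  have IND : ∀ k : ℕ, ∀ᵐ t ∂(volume.restrict (Ioc (L k) τ)),
      ∀ᵐ x ∂(volume : Measure (RN N)),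
        x ∈ ball z (ρ k) → ENNReal.ofReal (aseq k) ≤ u t x := by
    have hm' : ENNReal.ofReal m ≤ μ (ball z σ) := by
      rw [hm_def]; exact ENNReal.ofReal_toReal_le
    intro k
    induction k with
    | zero =>
      have hsol := ae_restrict_of_ae_restrict_of_subset (hWsub 0) hu.2
      filter_upwards [hsol, ae_restrict_mem measurableSet_Ioc] with t ht htm
      filter_upwards [ht] with x hx
      intro hxball
      rw [hx.2]
      refine le_trans ?_ le_self_add
      have h00 : 0 < L 0 := lt_of_lt_of_le (by linarith) (hLlow 0)
      have htpos : 0 < t := h00.trans htm.1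
      have htα1 : t^α ≤ σ^(2:ℝ) := by
        rw [← hτα]
        exact Real.rpow_le_rpow htpos.le htm.2 hα0.le
      have htα2 : σ^(2:ℝ)/2 ≤ t^α := by
        have hL0 : L 0 = τ/2 := by rw [hLeq 0]; ring
        have h1 : (τ/2)^α ≤ t^α := by
          apply Real.rpow_le_rpow (by linarith) _ hα0.le
          rw [← hL0]; exact le_trans (le_refl _) htm.1.le
        have h2 : (τ/2)^α = σ^(2:ℝ) / (2:ℝ)^α := by
          rw [Real.div_rpow hτ.le (by norm_num : (0:ℝ) ≤ 2), hτα]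
        have h3 : (2:ℝ)^α ≤ 2 := by
          calc (2:ℝ)^α ≤ (2:ℝ)^(1:ℝ) :=
                Real.rpow_le_rpow_of_exponent_le (by norm_num) hα1.le
          _ = 2 := Real.rpow_one 2
        have h2α : (0:ℝ) < (2:ℝ)^α := Real.rpow_pos_of_pos (by norm_num) α
        have h4 : σ^(2:ℝ)/2 ≤ σ^(2:ℝ)/(2:ℝ)^α := by gcongr
        calc σ^(2:ℝ)/2 ≤ σ^(2:ℝ)/(2:ℝ)^α := h4
        _ = (τ/2)^α := h2.symm
        _ ≤ t^α := h1
      have hts : ∀ θ ∈ Ioo a b,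
          ENNReal.ofReal (c₁ * σ^(-(N:ℝ))) * μ (ball z σ) ≤ heatSG N (t^α*θ) μ x := by
        intro θ hθ
        have hθpos : 0 < θ := lt_trans ha hθ.1
        have hs1 : a * σ^2 / 2 ≤ t^α*θ := by
          rw [← eσ]
          calc a * σ^(2:ℝ) / 2 = (σ^(2:ℝ)/2) * a := by ring
          _ ≤ t^α * θ := mul_le_mul htα2 hθ.1.le ha.le (Real.rpow_nonneg htpos.le α)
        have hs2 : t^α*θ ≤ b * σ^2 := by
          rw [← eσ]
          calc t^α * θ ≤ σ^(2:ℝ) * b :=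
                mul_le_mul htα1 hθ.2.le hθpos.le hσ2.le
          _ = b * σ^(2:ℝ) := mul_comm _ _
        calc ENNReal.ofReal (c₁ * σ^(-(N:ℝ))) * μ (ball z σ)
            = ∫⁻ _y in ball z σ, ENNReal.ofReal (c₁ * σ^(-(N:ℝ))) ∂μ :=
              (setLIntegral_const _ _).symm
        _ ≤ ∫⁻ y in ball z σ, ENNReal.ofReal (heatKernel N (t^α*θ) (x - y)) ∂μ := by
            apply lintegral_mono_ae
            filter_upwards [ae_restrict_mem measurableSet_ball] with y hy
            apply ENNReal.ofReal_le_ofReal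
            have hxz : dist x z < σ/2 := by
              have h5 := mem_ball.mp hxball
              have hρ0 : ρ 0 = σ/2 := by rw [hρeq 0]; ring
              rwa [hρ0] at h5
            have hyz : dist y z < σ := mem_ball.mp hy
            have hxy : ‖x - y‖ ≤ 2*σ := by
              rw [← dist_eq_norm]
              calc dist x y ≤ dist x z + dist z y := dist_triangle x z y
              _ = dist x z + dist y z := by rw [dist_comm z y]
              _ ≤ 2*σ := by linarith
            have hk := Aux.kernel_pointwise_lb N ha hb hσ (x - y) hs1 hs2 hxy
            calc c₁ * σ^(-(N:ℝ))
                = (4*Real.pi*b) ^ (-(N:ℝ)/2) * Real.exp (-(2/a)) * σ^(-(N:ℝ)) := by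
                  rw [hc₁_def]
            _ ≤ heatKernel N (t^α*θ) (x - y) := hk
        _ ≤ heatSG N (t^α*θ) μ x := setLIntegral_le_lintegral _ _
      have hfin2 : ENNReal.ofReal (c₁ * σ^(-(N:ℝ))) * μ (ball z σ) ≠ ⊤ :=
        ENNReal.mul_ne_top ENNReal.ofReal_ne_top hμball.ne
      calc ENNReal.ofReal (aseq 0)
          = ENNReal.ofReal (1/2) * (ENNReal.ofReal (c₁ * σ^(-(N:ℝ))) * ENNReal.ofReal m) := by
            rw [haseq0,
              show 1/2 * c₁ * σ ^ (-(N:ℝ)) * m = (1/2) * ((c₁ * σ^(-(N:ℝ))) * m) by ring,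
              ENNReal.ofReal_mul (by norm_num),
              ENNReal.ofReal_mul (mul_nonneg hc₁.le (Real.rpow_nonneg hσ.le _))]
      _ ≤ ENNReal.ofReal (1/2) * (ENNReal.ofReal (c₁ * σ^(-(N:ℝ))) * μ (ball z σ)) :=
          mul_le_mul_right (mul_le_mul_right hm' _) _
      _ ≤ (∫⁻ θ in Ioo a b, ENNReal.ofReal (h θ)) *
            (ENNReal.ofReal (c₁ * σ^(-(N:ℝ))) * μ (ball z σ)) := by
          apply mul_le_mul_left
          have h6 := Aux.lint_h_interval hα hh
          rw [← ha_def, ← hb_def] at h6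
          exact h6
      _ = ∫⁻ θ in Ioo a b, ENNReal.ofReal (h θ) *
            (ENNReal.ofReal (c₁ * σ^(-(N:ℝ))) * μ (ball z σ)) :=
          (lintegral_mul_const' _ _ hfin2).symm
      _ ≤ ∫⁻ θ in Ioo a b, ENNReal.ofReal (h θ) * heatSG N (t^α*θ) μ x := by
          apply lintegral_mono_ae
          filter_upwards [ae_restrict_mem measurableSet_Ioo] with θ hθ
          exact mul_le_mul_right (hts θ hθ) _
      _ ≤ ∫⁻ θ in Ioi (0:ℝ), ENNReal.ofReal (h θ) * heatSG N (t^α*θ) μ x :=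
          lintegral_mono' (Measure.restrict_mono (fun θ hθ => lt_trans ha hθ.1) le_rfl) le_rfl
      _ = Pop N α h t μ x := rfl
    | succ n ih =>
      have hsol := ae_restrict_of_ae_restrict_of_subset (hWsub (n+1)) hu.2
      filter_upwards [hsol, ae_restrict_mem measurableSet_Ioc] with t ht htm
      filter_upwards [ht] with x hx
      intro hxball
      rw [hx.2]
      refine le_trans ?_ le_add_self
      have hδpos : 0 < δs n * τ := mul_pos (hδspos n) hτ
      have hLn0 : 0 < L n := lt_of_lt_of_le (by linarith) (hLlow n)
      have hLnt : L n ≤ t - δs n * τ := by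
        have h4 : δs n * τ ≤ ((3:ℝ)/16 * (1/4)^n) * τ :=
          mul_le_mul_of_nonneg_right (hδsgap n) hτ.le
        have h5 : ((3:ℝ)/16*(1/4)^n)*τ = τ*((3:ℝ)/16*(1/4)^n) := mul_comm _ _
        have h3 := hLgap n
        have h6 := htm.1
        linarith
      have hIoosub : Ioo (t - δs n * τ) t ⊆ Ioc (L n) τ := by
        intro s hs
        exact ⟨lt_of_le_of_lt hLnt hs.1, le_trans hs.2.le htm.2⟩
      have hIoosub0 : Ioo (t - δs n * τ) t ⊆ Ioo 0 t := by
        intro s hs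
        exact ⟨lt_of_le_of_lt (by linarith) hs.1, hs.2⟩
      have hak := ae_restrict_of_ae_restrict_of_subset hIoosub ih
      have hinner : ∀ s ∈ Ioo (t - δs n * τ) t,
          (∀ᵐ y ∂(volume : Measure (RN N)),
            y ∈ ball z (ρ n) → ENNReal.ofReal (aseq n) ≤ u s y) →
          ENNReal.ofReal (a*(1/2)) * (ENNReal.ofReal κ2 * ENNReal.ofReal ((aseq n)^p))
            ≤ Sop N α h (t-s) (fun y => u s y ^ p) x := by
        intro s hs hsy
        have hts1 : 0 < t - s := by have := hs.2; linarith
        have hts2 : t - s ≤ δs n * τ := by have := hs.1; linarith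
        have hRkpos : 0 < ρ n - ρ (n+1) := by
          rw [hρgap n]; positivity
        have hJ : ∀ θ ∈ Ioo a b, ENNReal.ofReal κ2 * ENNReal.ofReal ((aseq n)^p)
            ≤ ∫⁻ y, ENNReal.ofReal (heatKernel N ((t-s)^α*θ) (x - y)) * (u s y ^ p) := by
          intro θ hθ
          have hθpos : 0 < θ := lt_trans ha hθ.1
          have hs'pos : 0 < (t-s)^α*θ := mul_pos (Real.rpow_pos_of_pos hts1 α) hθpos
          have hs'le : (t-s)^α*θ ≤ (ρ n - ρ (n+1))^2 := by
            calc (t-s)^α*θ ≤ (δs n * τ)^α * b :=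
                  mul_le_mul (Real.rpow_le_rpow hts1.le hts2 hα0.le) hθ.2.le hθpos.le
                    (Real.rpow_nonneg hδpos.le α)
            _ ≤ (ρ n - ρ (n+1))^2 := hsmall n
          have hballsub : ball x (ρ n - ρ (n+1)) ⊆ ball z (ρ n) := by
            intro y hy
            have h1 := mem_ball.mp hy
            have h2 := mem_ball.mp hxball
            rw [mem_ball]
            calc dist y z ≤ dist y x + dist x z := dist_triangle y x z
            _ < (ρ n - ρ (n+1)) + ρ (n+1) := by linarith
            _ = ρ n := by ring
          have hκle : ENNReal.ofReal κ2 ≤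
              ENNReal.ofReal ((4*Real.pi) ^ (-(N:ℝ)/2) * Real.exp (-(1/4))) *
                volume (ball (0:RN N) 1) := by
            rw [hκ2_def, ENNReal.ofReal_mul (by positivity)]
            exact mul_le_mul_right ENNReal.ofReal_toReal_le _
          calc ENNReal.ofReal κ2 * ENNReal.ofReal ((aseq n)^p)
              ≤ (ENNReal.ofReal ((4*Real.pi) ^ (-(N:ℝ)/2) * Real.exp (-(1/4))) *
                  volume (ball (0:RN N) 1)) * ENNReal.ofReal ((aseq n)^p) :=
                mul_le_mul_left hκle _
          _ ≤ (∫⁻ y in ball x (ρ n - ρ (n+1)),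
                ENNReal.ofReal (heatKernel N ((t-s)^α*θ) (x - y))) *
                  ENNReal.ofReal ((aseq n)^p) :=
              mul_le_mul_left (Aux.kernel_ball_lb N hN hs'pos hRkpos hs'le x) _
          _ = ∫⁻ y in ball x (ρ n - ρ (n+1)),
                ENNReal.ofReal (heatKernel N ((t-s)^α*θ) (x - y)) *
                  ENNReal.ofReal ((aseq n)^p) :=
              (lintegral_mul_const' _ _ ENNReal.ofReal_ne_top).symm
          _ ≤ ∫⁻ y in ball x (ρ n - ρ (n+1)),
                ENNReal.ofReal (heatKernel N ((t-s)^α*θ) (x - y)) * (u s y ^ p) := by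
              apply lintegral_mono_ae
              filter_upwards [ae_restrict_mem measurableSet_ball, ae_restrict_of_ae hsy]
                with y hy hy2
              apply mul_le_mul_right
              have h3 : ENNReal.ofReal (aseq n) ≤ u s y := hy2 (hballsub hy)
              calc ENNReal.ofReal ((aseq n)^p) = (ENNReal.ofReal (aseq n))^p :=
                  (ENNReal.ofReal_rpow_of_nonneg (haseq_nn n) (by linarith)).symm
              _ ≤ (u s y)^p := ENNReal.rpow_le_rpow h3 (by linarith)
          _ ≤ ∫⁻ y, ENNReal.ofReal (heatKernel N ((t-s)^α*θ) (x - y)) * (u s y ^ p) :=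
              setLIntegral_le_lintegral _ _
        have hfinD : ENNReal.ofReal κ2 * ENNReal.ofReal ((aseq n)^p) ≠ ⊤ :=
          ENNReal.mul_ne_top ENNReal.ofReal_ne_top ENNReal.ofReal_ne_top
        calc ENNReal.ofReal (a*(1/2)) * (ENNReal.ofReal κ2 * ENNReal.ofReal ((aseq n)^p))
            ≤ (∫⁻ θ in Ioo a b, ENNReal.ofReal (θ * h θ)) *
                (ENNReal.ofReal κ2 * ENNReal.ofReal ((aseq n)^p)) := by
              apply mul_le_mul_left
              have h7 := Aux.lint_th_interval hα hh
              rw [← ha_def, ← hb_def] at h7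
              exact h7
        _ = ∫⁻ θ in Ioo a b, ENNReal.ofReal (θ * h θ) *
              (ENNReal.ofReal κ2 * ENNReal.ofReal ((aseq n)^p)) :=
            (lintegral_mul_const' _ _ hfinD).symm
        _ ≤ ∫⁻ θ in Ioo a b, ENNReal.ofReal (θ * h θ) *
              ∫⁻ y, ENNReal.ofReal (heatKernel N ((t-s)^α*θ) (x - y)) * (u s y ^ p) := by
            apply lintegral_mono_ae
            filter_upwards [ae_restrict_mem measurableSet_Ioo] with θ hθ
            exact mul_le_mul_right (hJ θ hθ) _
        _ ≤ ∫⁻ θ in Ioi (0:ℝ), ENNReal.ofReal (θ * h θ) *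
              ∫⁻ y, ENNReal.ofReal (heatKernel N ((t-s)^α*θ) (x - y)) * (u s y ^ p) :=
            lintegral_mono' (Measure.restrict_mono (fun θ hθ => lt_trans ha hθ.1) le_rfl) le_rfl
        _ = Sop N α h (t-s) (fun y => u s y ^ p) x := rfl
      have key : ∀ᵐ s ∂(volume.restrict (Ioo (t - δs n * τ) t)),
          ENNReal.ofReal ((δs n * τ)^(α-1)) *
            (ENNReal.ofReal (a*(1/2)) * (ENNReal.ofReal κ2 * ENNReal.ofReal ((aseq n)^p)))
            ≤ ENNReal.ofReal ((t-s)^(α-1)) * Sop N α h (t-s) (fun y => u s y ^ p) x := by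
        filter_upwards [ae_restrict_mem measurableSet_Ioo, hak] with s hs hsy
        have hts1 : 0 < t - s := by have := hs.2; linarith
        have hts2 : t - s ≤ δs n * τ := by have := hs.1; linarith
        have hpow : ENNReal.ofReal ((δs n * τ)^(α-1)) ≤ ENNReal.ofReal ((t-s)^(α-1)) :=
          ENNReal.ofReal_le_ofReal (Real.rpow_le_rpow_of_nonpos hts1 hts2 (by linarith))
        calc ENNReal.ofReal ((δs n * τ)^(α-1)) *
              (ENNReal.ofReal (a*(1/2)) * (ENNReal.ofReal κ2 * ENNReal.ofReal ((aseq n)^p)))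
            ≤ ENNReal.ofReal ((t-s)^(α-1)) *
              (ENNReal.ofReal (a*(1/2)) * (ENNReal.ofReal κ2 * ENNReal.ofReal ((aseq n)^p))) :=
              mul_le_mul_left hpow _
        _ ≤ ENNReal.ofReal ((t-s)^(α-1)) * Sop N α h (t-s) (fun y => u s y ^ p) x :=
              mul_le_mul_right (hinner s hs hsy) _
      have hαint : ENNReal.ofReal ((δs n * τ)^(α-1)) *
            (ENNReal.ofReal (a*(1/2)) * (ENNReal.ofReal κ2 * ENNReal.ofReal ((aseq n)^p))) *
            ENNReal.ofReal (δs n * τ)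
          ≤ ∫⁻ s in Ioo (0:ℝ) t,
              ENNReal.ofReal ((t-s)^(α-1)) * Sop N α h (t-s) (fun y => u s y ^ p) x := by
        calc ENNReal.ofReal ((δs n * τ)^(α-1)) *
              (ENNReal.ofReal (a*(1/2)) * (ENNReal.ofReal κ2 * ENNReal.ofReal ((aseq n)^p))) *
              ENNReal.ofReal (δs n * τ)
            = ∫⁻ _s in Ioo (t - δs n * τ) t,
                ENNReal.ofReal ((δs n * τ)^(α-1)) *
                  (ENNReal.ofReal (a*(1/2)) *
                    (ENNReal.ofReal κ2 * ENNReal.ofReal ((aseq n)^p))) := by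
              rw [setLIntegral_const, Real.volume_Ioo,
                show t - (t - δs n * τ) = δs n * τ by ring]
        _ ≤ ∫⁻ s in Ioo (t - δs n * τ) t,
              ENNReal.ofReal ((t-s)^(α-1)) * Sop N α h (t-s) (fun y => u s y ^ p) x :=
            lintegral_mono_ae key
        _ ≤ ∫⁻ s in Ioo (0:ℝ) t,
              ENNReal.ofReal ((t-s)^(α-1)) * Sop N α h (t-s) (fun y => u s y ^ p) x :=
            lintegral_mono' (Measure.restrict_mono hIoosub0 le_rfl) le_rfl
      have hreal : aseq (n+1) =
          α * ((δs n * τ)^(α-1) * ((a*(1/2)) * (κ2 * (aseq n)^p)) * (δs n * τ)) := by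
        rw [haseqS n]
        have hprod : (δs n * τ)^(α-1) * (δs n * τ) = (δs n * τ)^α := by
          have h1 := Real.rpow_add hδpos (α-1) 1
          rw [Real.rpow_one] at h1
          rw [show α - 1 + 1 = α by ring] at h1
          linarith
        conv_rhs => rw [show (δs n*τ)^(α-1) * ((a*(1/2))*(κ2*(aseq n)^p)) * (δs n*τ)
            = ((δs n*τ)^(α-1) * (δs n*τ)) * ((a*(1/2))*(κ2*(aseq n)^p)) from by ring,
          hprod, hδα n]
        rw [hCC_def]
        ring
      calc ENNReal.ofReal (aseq (n+1))
          = ENNReal.ofReal α * (ENNReal.ofReal ((δs n*τ)^(α-1)) *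
              (ENNReal.ofReal (a*(1/2)) * (ENNReal.ofReal κ2 * ENNReal.ofReal ((aseq n)^p))) *
              ENNReal.ofReal (δs n*τ)) := by
            rw [hreal, ENNReal.ofReal_mul hα0.le, ENNReal.ofReal_mul' hδpos.le,
              ENNReal.ofReal_mul (Real.rpow_nonneg hδpos.le _),
              ENNReal.ofReal_mul (by positivity : (0:ℝ) ≤ a*(1/2)),
              ENNReal.ofReal_mul hκ2.le]
      _ ≤ ENNReal.ofReal α * ∫⁻ s in Ioo (0:ℝ) t,
            ENNReal.ofReal ((t-s)^(α-1)) * Sop N α h (t-s) (fun y => u s y ^ p) x :=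
          mul_le_mul_right hαint _

  -- blow-up of the rescaled sequence
  obtain ⟨E, hE_def⟩ : ∃ _x : ℝ, _x = 2/(p-1) := ⟨_, rfl⟩
  have hp1 : p - 1 ≠ 0 := sub_ne_zero.mpr (ne_of_gt hp)
  have hEp : E * p = E + 2 := by
    rw [hE_def]; field_simp; ring
  have hbseq : ∀ M : ℝ, ∃ k, M ≤ σ ^ E * aseq k := by
    have hrecb : ∀ k, σ ^ E * aseq (k+1) = CC * q^k * (σ ^ E * aseq k)^p := by
      intro k
      have h1 : (σ^E * aseq k)^p = σ^E * σ^(2:ℝ) * (aseq k)^p := by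
        rw [Real.mul_rpow (Real.rpow_nonneg hσ.le E) (haseq_nn k),
          ← Real.rpow_mul hσ.le, hEp, Real.rpow_add hσ E 2]
      rw [haseqS k, h1]
      ring
    have hb0 : κ ≤ σ ^ E * aseq 0 := by
      have hprod : σ^E * σ^(-(N:ℝ)) * σ^((N:ℝ) - 2/(p-1)) = 1 := by
        rw [← Real.rpow_add hσ, ← Real.rpow_add hσ,
          show E + -(N:ℝ) + ((N:ℝ) - 2/(p-1)) = 0 by rw [hE_def]; ring, Real.rpow_zero]
      have h1 : σ^E * (1/2 * c₁ * σ^(-(N:ℝ))) * ((2*κ/c₁) * σ^((N:ℝ) - 2/(p-1))) = κ := by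
        calc σ^E * (1/2 * c₁ * σ^(-(N:ℝ))) * ((2*κ/c₁) * σ^((N:ℝ) - 2/(p-1)))
            = (1/2 * c₁ * (2*κ/c₁)) * (σ^E * σ^(-(N:ℝ)) * σ^((N:ℝ) - 2/(p-1))) := by ring
        _ = κ := by rw [hprod, mul_one]; field_simp
      have h2 : σ^E * (1/2 * c₁ * σ^(-(N:ℝ))) * ((2*κ/c₁) * σ^((N:ℝ) - 2/(p-1)))
          ≤ σ^E * (1/2 * c₁ * σ^(-(N:ℝ))) * m := by
        have h4 := Real.rpow_pos_of_pos hσ E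
        have h5 := Real.rpow_pos_of_pos hσ (-(N:ℝ))
        exact mul_le_mul_of_nonneg_left hcon.le
          (le_of_lt (mul_pos h4 (mul_pos (mul_pos one_half_pos hc₁) h5)))
      rw [haseq0]
      calc κ = _ := h1.symm
      _ ≤ _ := h2
      _ = σ ^ E * (1/2 * c₁ * σ ^ (-(N:ℝ)) * m) := by ring
    intro M
    obtain ⟨k, hk⟩ := hblow (fun k => σ ^ E * aseq k) hrecb hb0 M
    exact ⟨k, hk⟩
  -- contradiction on the core region
  have hLcore : ∀ k, Ioc (τ*(3/4)) τ ⊆ Ioc (L k) τ := by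
    intro k
    have h1 : (0:ℝ) ≤ τ * (1/4:ℝ)^(k+1) :=
      le_of_lt (mul_pos hτ (pow_pos (show (0:ℝ) < 1/4 by norm_num) (k+1)))
    have h2 : L k ≤ τ*(3/4) := by rw [hLeq k]; linarith
    exact Ioc_subset_Ioc_left h2
  have hcore : ∀ k : ℕ, ∀ᵐ t ∂(volume.restrict (Ioc (τ*(3/4)) τ)),
      ∀ᵐ x ∂(volume : Measure (RN N)), x ∈ ball z (σ/4) → ENNReal.ofReal (aseq k) ≤ u t x := by
    intro k
    filter_upwards [ae_restrict_of_ae_restrict_of_subset (hLcore k) (IND k)] with t ht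
    filter_upwards [ht] with x hx hb4
    exact hx (ball_subset_ball (hρlow k) hb4)
  have hfin : ∀ᵐ t ∂(volume.restrict (Ioc (τ*(3/4)) τ)),
      ∀ᵐ x ∂(volume : Measure (RN N)), u t x < ⊤ := by
    have hsolc := ae_restrict_of_ae_restrict_of_subset ((hLcore 0).trans (hWsub 0)) hu.2
    filter_upwards [hsolc] with t ht
    filter_upwards [ht] with x hx
    exact hx.1
  have hFalse : ∀ᵐ t ∂(volume.restrict (Ioc (τ*(3/4)) τ)), False := by
    filter_upwards [ae_all_iff.mpr hcore, hfin] with t h1 h2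
    have h4 : ∀ᵐ x ∂(volume : Measure (RN N)), x ∉ ball z (σ/4) := by
      have h3 : ∀ᵐ x ∂(volume : Measure (RN N)),
          (∀ k : ℕ, x ∈ ball z (σ/4) → ENNReal.ofReal (aseq k) ≤ u t x) ∧ u t x < ⊤ :=
        (ae_all_iff.mpr h1).and h2
      filter_upwards [h3] with x hx
      intro hball
      have hne : u t x ≠ ⊤ := hx.2.ne
      obtain ⟨k, hk⟩ := hbseq (((u t x).toReal + 1) * σ ^ E)
      have hEpos : (0:ℝ) < σ ^ E := Real.rpow_pos_of_pos hσ E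
      have hak : (u t x).toReal + 1 ≤ aseq k := by
        rw [mul_comm ((u t x).toReal + 1) (σ ^ E)] at hk
        exact le_of_mul_le_mul_left hk hEpos
      have hlt : u t x < ENNReal.ofReal (aseq k) := by
        rw [ENNReal.lt_ofReal_iff_toReal_lt hne]
        linarith
      exact absurd (hx.1 k hball) (not_le.mpr hlt)
    have h5 : volume (ball z (σ/4)) = 0 := by
      rw [ae_iff] at h4
      simp at h4; exact h4
    exact absurd h5 (ne_of_gt (measure_ball_pos volume z (by linarith)))
  have h6 : volume.restrict (Ioc (τ*(3/4)) τ) univ = 0 := by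
    rw [ae_iff] at hFalse
    simpa using hFalse
  rw [Measure.restrict_apply_univ, Real.volume_Ioc] at h6
  have h7 : τ - τ*(3/4) ≤ 0 := by
    by_contra hpos'
    push_neg at hpos'
    exact absurd h6 (ne_of_gt (ENNReal.ofReal_pos.mpr hpos'))
  linarith
end
end

section
/- Let N ≥ 1, α ∈ (0,1) and p = p_F = 1 + 2/N. There exists a constant γ₁' = γ₁'(N,α) > 0 with the following property: if μ is a nonnegative Radon measure on ℝ^N, 0 < T < ∞, and the time-fractional problem ∂_t^α u − Δu = u^{p_F}, u(0) = μ possesses a nonnegative solution on [0,T]×ℝ^N, then sup_{z∈ℝ^N} μ(B(z,σ)) ≤ γ₁' (∫_{σ^{2/α}/(16T)}^{1/4} t^{−α} dt)^{−N/2} for every σ ∈ (0, T^{α/2}]. -/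
open MeasureTheory Real Set Metric
open scoped ENNReal NNReal

noncomputable section

section Density
variable {α : ℝ} {h : ℝ → ℝ}

lemma Hmom0 (H : IsAdmissibleDensity α h) : ∫ θ in Ioi (0:ℝ), h θ = 1 := by
  have := H.moment 0 (by norm_num)
  simpa [Real.Gamma_one] using this

lemma Hmom1 (H : IsAdmissibleDensity α h) :
    ∫ θ in Ioi (0:ℝ), θ * h θ = (Real.Gamma (1+α))⁻¹ := by
  have h1 := H.moment 1 (by norm_num)
  rw [show (1:ℝ)+1 = 2 by norm_num, Real.Gamma_two, show α*1 = α by ring] at h1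
  rw [show (fun θ:ℝ => θ * h θ) = (fun θ:ℝ => θ^(1:ℝ) * h θ) by
    funext θ; rw [Real.rpow_one]]
  rw [h1, inv_eq_one_div]

lemma Hmom2 (H : IsAdmissibleDensity α h) :
    ∫ θ in Ioi (0:ℝ), θ^2 * h θ = 2 / Real.Gamma (1 + α*2) := by
  have := H.moment 2 (by norm_num)
  rw [show ((1:ℝ)+2) = 3 by norm_num] at this
  rw [show Real.Gamma 3 = 2 by
    rw [show (3:ℝ) = 2+1 by norm_num, Real.Gamma_add_one (by norm_num), Real.Gamma_two]; ring] at this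
  rw [show (fun θ:ℝ => θ^(2:ℕ) * h θ) = (fun θ:ℝ => θ^((2:ℕ):ℝ) * h θ) by
    funext θ; rw [Real.rpow_natCast]]
  exact_mod_cast this

lemma Hint0 (H : IsAdmissibleDensity α h) : IntegrableOn h (Ioi (0:ℝ)) := by
  by_contra hc
  have h0 := Hmom0 H
  rw [MeasureTheory.integral_undef hc] at h0
  norm_num at h0

lemma Hint1 (H : IsAdmissibleDensity α h) (hα : 0 < α) :
    IntegrableOn (fun θ => θ * h θ) (Ioi (0:ℝ)) := by
  by_contra hc
  have h0 := Hmom1 H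
  rw [MeasureTheory.integral_undef hc] at h0
  have : (0:ℝ) < (Real.Gamma (1+α))⁻¹ :=
    inv_pos.2 (Real.Gamma_pos_of_pos (by linarith))
  rw [← h0] at this; exact lt_irrefl _ this

lemma Hint2 (H : IsAdmissibleDensity α h) (hα : 0 < α) :
    IntegrableOn (fun θ => θ^2 * h θ) (Ioi (0:ℝ)) := by
  by_contra hc
  have h0 := Hmom2 H
  rw [MeasureTheory.integral_undef hc] at h0
  have : (0:ℝ) < 2 / Real.Gamma (1+α*2) :=
    div_pos (by norm_num) (Real.Gamma_pos_of_pos (by linarith))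
  rw [← h0] at this; exact lt_irrefl _ this

end Density

def epsA (α : ℝ) : ℝ := min (1/2) ((Real.Gamma (1+α))⁻¹/4)
def AA (α : ℝ) : ℝ := max 1 (4 * (2/Real.Gamma (1+α*2)) * Real.Gamma (1+α))

section Mid
variable {α : ℝ} {h : ℝ → ℝ}

lemma m1_pos {α : ℝ} (hα : 0 < α) : 0 < (Real.Gamma (1+α))⁻¹ :=
  inv_pos.2 (Real.Gamma_pos_of_pos (by linarith))

lemma epsA_pos {α : ℝ} (hα : 0 < α) : 0 < epsA α :=
  lt_min (by norm_num) (by linarith [m1_pos hα])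

lemma AA_ge_one (α : ℝ) : 1 ≤ AA α := le_max_left _ _

lemma epsA_lt_AA {α : ℝ} (hα : 0 < α) : epsA α < AA α :=
  lt_of_le_of_lt (min_le_left _ _) (by linarith [AA_ge_one α])

lemma hnn (H : IsAdmissibleDensity α h) {s : Set ℝ} (hs : MeasurableSet s)
    (hs' : s ⊆ Ioi 0) : 0 ≤ᵐ[volume.restrict s] h :=
  (ae_restrict_mem hs).mono fun θ hθ => (H.pos θ (hs' hθ)).le

lemma midmass1 (H : IsAdmissibleDensity α h) (hα : α ∈ Ioo (0:ℝ) 1) :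
    (Real.Gamma (1+α))⁻¹/2 ≤ ∫ θ in Ioc (epsA α) (AA α), θ * h θ := by
  set m1 := (Real.Gamma (1+α))⁻¹ with hm1
  set m2 := 2/Real.Gamma (1+α*2) with hm2
  set ε := epsA α with hε
  set A := AA α with hA
  have hm1p : 0 < m1 := m1_pos hα.1
  have hΓp : 0 < Real.Gamma (1+α*2) := Real.Gamma_pos_of_pos (by linarith [hα.1])
  have hm2p : 0 < m2 := div_pos (by norm_num) hΓp
  have hεp : 0 < ε := epsA_pos hα.1
  have hA1 : 1 ≤ A := AA_ge_one α
  have hεA : ε < A := epsA_lt_AA hα.1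
  have hεm : ε ≤ m1/4 := min_le_right _ _
  have hAm : 4 * m2 / m1 ≤ A := by
    have e : 4 * m2 / m1 = 4 * m2 * Real.Gamma (1+α) := by
      rw [hm1]; field_simp
    rw [e]; exact le_max_right _ _
  have hsub1 : Ioc (0:ℝ) ε ⊆ Ioi 0 := Ioc_subset_Ioi_self
  have hsub2 : Ioc ε A ⊆ Ioi 0 := fun x hx => lt_trans hεp hx.1
  have hsub3 : Ioi A ⊆ Ioi (0:ℝ) := fun x hx => lt_trans (by linarith : (0:ℝ) < A) hx
  have hsub4 : Ioc (0:ℝ) A ⊆ Ioi 0 := Ioc_subset_Ioi_self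
  have hint : IntegrableOn (fun θ => θ * h θ) (Ioi 0) := Hint1 H hα.1
  have i1 : IntegrableOn (fun θ => θ * h θ) (Ioc 0 ε) := hint.mono_set hsub1
  have i2 : IntegrableOn (fun θ => θ * h θ) (Ioc ε A) := hint.mono_set hsub2
  have i3 : IntegrableOn (fun θ => θ * h θ) (Ioi A) := hint.mono_set hsub3
  have i4 : IntegrableOn (fun θ => θ * h θ) (Ioc 0 A) := hint.mono_set hsub4
  have hd1 : Disjoint (Ioc (0:ℝ) A) (Ioi A) := by
    rw [Set.disjoint_left]; intro x hx hx'; exact absurd hx.2 (not_le.2 hx')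
  have hd2 : Disjoint (Ioc (0:ℝ) ε) (Ioc ε A) := by
    rw [Set.disjoint_left]; intro x hx hx'; exact absurd hx.2 (not_le.2 hx'.1)
  have split1 : ∫ θ in Ioi (0:ℝ), θ * h θ
      = (∫ θ in Ioc (0:ℝ) A, θ * h θ) + ∫ θ in Ioi A, θ * h θ := by
    rw [← MeasureTheory.setIntegral_union hd1 measurableSet_Ioi i4 i3,
      Ioc_union_Ioi_eq_Ioi (by linarith : (0:ℝ) ≤ A)]
  have split2 : ∫ θ in Ioc (0:ℝ) A, θ * h θ
      = (∫ θ in Ioc (0:ℝ) ε, θ * h θ) + ∫ θ in Ioc ε A, θ * h θ := by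
    rw [← MeasureTheory.setIntegral_union hd2 measurableSet_Ioc i1 i2,
      Ioc_union_Ioc_eq_Ioc hεp.le hεA.le]
  have p1 : ∫ θ in Ioc (0:ℝ) ε, θ * h θ ≤ m1/4 := by
    have ih : IntegrableOn (fun θ => ε * h θ) (Ioc (0:ℝ) ε) :=
      ((Hint0 H).mono_set hsub1).const_mul ε
    have step : ∫ θ in Ioc (0:ℝ) ε, θ * h θ ≤ ∫ θ in Ioc (0:ℝ) ε, ε * h θ := by
      refine MeasureTheory.setIntegral_mono_on i1 ih measurableSet_Ioc fun x hx => ?_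
      exact mul_le_mul_of_nonneg_right hx.2 (H.pos x (hsub1 hx)).le
    have e : ∫ θ in Ioc (0:ℝ) ε, ε * h θ = ε * ∫ θ in Ioc (0:ℝ) ε, h θ :=
      MeasureTheory.integral_const_mul ε _
    have step2 : ∫ θ in Ioc (0:ℝ) ε, h θ ≤ ∫ θ in Ioi (0:ℝ), h θ :=
      MeasureTheory.setIntegral_mono_set (Hint0 H)
        (hnn H measurableSet_Ioi (fun x hx => hx)) hsub1.eventuallyLE
    rw [Hmom0 H] at step2
    have : ε * ∫ θ in Ioc (0:ℝ) ε, h θ ≤ ε * 1 :=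
      mul_le_mul_of_nonneg_left step2 hεp.le
    calc ∫ θ in Ioc (0:ℝ) ε, θ * h θ ≤ _ := step
    _ = _ := e
    _ ≤ ε * 1 := this
    _ ≤ m1/4 := by linarith
  have p3 : ∫ θ in Ioi A, θ * h θ ≤ m1/4 := by
    have iq : IntegrableOn (fun θ => θ^2 * h θ) (Ioi (0:ℝ)) := Hint2 H hα.1
    have ih : IntegrableOn (fun θ => (θ^2 * h θ)/A) (Ioi A) :=
      (iq.mono_set hsub3).div_const A
    have step : ∫ θ in Ioi A, θ * h θ ≤ ∫ θ in Ioi A, (θ^2 * h θ)/A := by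
      refine MeasureTheory.setIntegral_mono_on i3 ih measurableSet_Ioi fun x hx => ?_
      have hxA : A ≤ x := le_of_lt hx
      have hh : 0 ≤ h x := (H.pos x (hsub3 hx)).le
      rw [le_div_iff₀ (by linarith : (0:ℝ) < A)]
      nlinarith [mul_le_mul_of_nonneg_right hxA (mul_nonneg (by linarith : (0:ℝ) ≤ x) hh)]
    have e : ∫ θ in Ioi A, (θ^2 * h θ)/A = (∫ θ in Ioi A, θ^2 * h θ)/A :=
      MeasureTheory.integral_div A _
    have step2 : ∫ θ in Ioi A, θ^2 * h θ ≤ ∫ θ in Ioi (0:ℝ), θ^2 * h θ := by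
      refine MeasureTheory.setIntegral_mono_set iq ?_ hsub3.eventuallyLE
      exact (ae_restrict_mem measurableSet_Ioi).mono fun θ hθ =>
        mul_nonneg (sq_nonneg θ) (H.pos θ hθ).le
    rw [Hmom2 H] at step2
    have hm2A : m2/A ≤ m1/4 := by
      have h1 : m2/A ≤ m2/(4*m2/m1) :=
        div_le_div_of_nonneg_left hm2p.le (div_pos (by linarith) hm1p) hAm
      have h2 : m2/(4*m2/m1) = m1/4 := by field_simp
      linarith
    calc ∫ θ in Ioi A, θ * h θ ≤ _ := step
    _ = _ := e
    _ ≤ m2/A := by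
        apply div_le_div_of_nonneg_right ?_ ?_ |>.trans_eq rfl
        · exact step2
        · linarith
    _ ≤ m1/4 := hm2A
  have total : ∫ θ in Ioi (0:ℝ), θ * h θ = m1 := Hmom1 H
  linarith [split1, split2, p1, p3, total]

lemma midmass0 (H : IsAdmissibleDensity α h) (hα : α ∈ Ioo (0:ℝ) 1) :
    (Real.Gamma (1+α))⁻¹/(2 * AA α) ≤ ∫ θ in Ioc (epsA α) (AA α), h θ := by
  set m1 := (Real.Gamma (1+α))⁻¹ with hm1
  set ε := epsA α with hε
  set A := AA α with hA
  have hεp : 0 < ε := epsA_pos hα.1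
  have hA1 : 1 ≤ A := AA_ge_one α
  have hsub2 : Ioc ε A ⊆ Ioi 0 := fun x hx => lt_trans hεp hx.1
  have hint2 : IntegrableOn (fun θ => θ * h θ) (Ioc ε A) :=
    (Hint1 H hα.1).mono_set hsub2
  have step : ∫ θ in Ioc ε A, (θ * h θ)/A ≤ ∫ θ in Ioc ε A, h θ := by
    refine MeasureTheory.setIntegral_mono_on (hint2.div_const A)
      ((Hint0 H).mono_set hsub2) measurableSet_Ioc fun x hx => ?_
    have hh : 0 ≤ h x := (H.pos x (hsub2 hx)).le
    rw [div_le_iff₀ (by linarith : (0:ℝ) < A)]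
    nlinarith [mul_le_mul_of_nonneg_right hx.2 hh]
  have e : ∫ θ in Ioc ε A, (θ * h θ)/A = (∫ θ in Ioc ε A, θ * h θ)/A :=
    MeasureTheory.integral_div A _
  have mm := midmass1 H hα
  have : m1/2/A ≤ (∫ θ in Ioc ε A, θ * h θ)/A :=
    div_le_div_of_nonneg_right mm (by linarith) |>.trans_eq rfl
  have e2 : m1/2/A = m1/(2*A) := by ring
  linarith

lemma midmassL1 (H : IsAdmissibleDensity α h) (hα : α ∈ Ioo (0:ℝ) 1) :
    ENNReal.ofReal ((Real.Gamma (1+α))⁻¹/2)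
      ≤ ∫⁻ θ in Ioc (epsA α) (AA α), ENNReal.ofReal (θ * h θ) := by
  have hsub2 : Ioc (epsA α) (AA α) ⊆ Ioi 0 := fun x hx => lt_trans (epsA_pos hα.1) hx.1
  have hint : IntegrableOn (fun θ => θ * h θ) (Ioc (epsA α) (AA α)) :=
    (Hint1 H hα.1).mono_set hsub2
  have hnn' : 0 ≤ᵐ[volume.restrict (Ioc (epsA α) (AA α))] fun θ => θ * h θ :=
    (ae_restrict_mem measurableSet_Ioc).mono fun θ hθ =>
      mul_nonneg (le_of_lt (hsub2 hθ)) (H.pos θ (hsub2 hθ)).le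
  rw [← MeasureTheory.ofReal_integral_eq_lintegral_ofReal hint hnn']
  exact ENNReal.ofReal_le_ofReal (midmass1 H hα)

lemma midmassL0 (H : IsAdmissibleDensity α h) (hα : α ∈ Ioo (0:ℝ) 1) :
    ENNReal.ofReal ((Real.Gamma (1+α))⁻¹/(2 * AA α))
      ≤ ∫⁻ θ in Ioc (epsA α) (AA α), ENNReal.ofReal (h θ) := by
  have hsub2 : Ioc (epsA α) (AA α) ⊆ Ioi 0 := fun x hx => lt_trans (epsA_pos hα.1) hx.1
  rw [← MeasureTheory.ofReal_integral_eq_lintegral_ofReal ((Hint0 H).mono_set hsub2)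
    (hnn H measurableSet_Ioc hsub2)]
  exact ENNReal.ofReal_le_ofReal (midmass0 H hα)

end Mid

lemma rpow_neg_anti {a b c : ℝ} (ha : 0 < a) (hab : a ≤ b) (hc : 0 ≤ c) :
    b ^ (-c) ≤ a ^ (-c) := by
  rw [Real.rpow_neg ha.le, Real.rpow_neg (ha.trans_le hab).le]
  exact inv_anti₀ (Real.rpow_pos_of_pos ha c) (Real.rpow_le_rpow ha.le hab hc)

lemma heatKernel_lower (N : ℕ) {τ σ' : ℝ} (hτ : 0 < τ) {w : RN N} (hw : ‖w‖ ≤ 2*σ') :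
    (4*Real.pi*τ) ^ (-(N:ℝ)/2) * Real.exp (-(2*σ')^2/(4*τ)) ≤ heatKernel N τ w := by
  unfold heatKernel
  refine mul_le_mul_of_nonneg_left ?_ (Real.rpow_pos_of_pos (by positivity) _).le
  refine Real.exp_le_exp.2 ?_
  have h1 : ‖w‖^2 ≤ (2*σ')^2 := pow_le_pow_left₀ (norm_nonneg w) hw 2
  have h2 : (0:ℝ) < 4*τ := by linarith
  rw [div_le_div_iff₀ h2 h2]
  nlinarith

/-- pointwise kernel bound used everywhere:
if `τ0 ≤ τ ≤ T`, `θ ∈ Ioc ε A`, `‖w‖ ≤ 2σ`, `σ^2 = T^α`, and `T^α/(τ0^α*ε) ≤ X`, then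
`heatKernel N (τ^α*θ) w ≥ (4π T^α A)^{-N/2} e^{-X}`. -/
lemma kernel_main (N : ℕ) {α T τ τ0 ε A X σ : ℝ} (hα : α ∈ Ioo (0:ℝ) 1)
    (hT : 0 < T) (hτ0 : 0 < τ0) (hτ1 : τ0 ≤ τ) (hτ2 : τ ≤ T)
    (hε : 0 < ε) {θ : ℝ} (hθ : θ ∈ Ioc ε A)
    (hσnn : 0 ≤ σ) (hσ : σ^2 = T^α) (hX : T^α/(τ0^α*ε) ≤ X)
    {w : RN N} (hw : ‖w‖ ≤ 2*σ) :
    (4*Real.pi*(T^α*A)) ^ (-(N:ℝ)/2) * Real.exp (-X) ≤ heatKernel N (τ^α*θ) w := by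
  have hτp : 0 < τ := lt_of_lt_of_le hτ0 hτ1
  have hτα : 0 < τ^α := Real.rpow_pos_of_pos hτp α
  have hτ0α : 0 < τ0^α := Real.rpow_pos_of_pos hτ0 α
  have hθp : 0 < θ := lt_trans hε hθ.1
  have hτθ : 0 < τ^α*θ := mul_pos hτα hθp
  have hTα : 0 < T^α := Real.rpow_pos_of_pos hT α
  have h1 : (4*Real.pi*(τ^α*θ)) ^ (-(N:ℝ)/2) ≥ (4*Real.pi*(T^α*A)) ^ (-(N:ℝ)/2) := by
    have e : -(N:ℝ)/2 = -((N:ℝ)/2) := by ring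
    rw [e]
    refine rpow_neg_anti (by positivity) ?_ (by positivity)
    have : τ^α*θ ≤ T^α*A := by
      have h2 : τ^α ≤ T^α := Real.rpow_le_rpow hτp.le hτ2 (le_of_lt hα.1)
      have h3 : θ ≤ A := hθ.2
      nlinarith
    nlinarith [Real.pi_pos]
  have h2 : Real.exp (-X) ≤ Real.exp (-(2*σ)^2/(4*(τ^α*θ))) := by
    refine Real.exp_le_exp.2 ?_
    have e1 : -(2*σ)^2/(4*(τ^α*θ)) = -(T^α/(τ^α*θ)) := by
      rw [← hσ]; ring
    have e2 : T^α/(τ^α*θ) ≤ T^α/(τ0^α*ε) := by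
      refine div_le_div_of_nonneg_left hTα.le (by positivity) ?_
      have h4 : τ0^α ≤ τ^α := Real.rpow_le_rpow hτ0.le hτ1 (le_of_lt hα.1)
      nlinarith [mul_le_mul h4 (le_of_lt hθ.1) hε.le hτα.le]
    rw [e1]
    linarith
  calc (4*Real.pi*(T^α*A)) ^ (-(N:ℝ)/2) * Real.exp (-X)
      ≤ (4*Real.pi*(τ^α*θ)) ^ (-(N:ℝ)/2) * Real.exp (-(2*σ)^2/(4*(τ^α*θ))) := by
        refine mul_le_mul h1 h2 (Real.exp_pos _).le (Real.rpow_pos_of_pos (by positivity) _).le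
    _ ≤ heatKernel N (τ^α*θ) w := heatKernel_lower N hτθ hw

section Lower
variable {N : ℕ} {α : ℝ} {h : ℝ → ℝ} {T : ℝ}

lemma sigma_sq {α T : ℝ} (hT : 0 < T) : (T^(α/2))^2 = T^α := by
  rw [← Real.rpow_natCast (T^(α/2)) 2, ← Real.rpow_mul hT.le]
  norm_num

lemma hX_base {α T : ℝ} (hα : α ∈ Ioo (0:ℝ) 1) (hT : 0 < T) {ε : ℝ} (hε : 0 < ε) :
    T^α/((T/2)^α*ε) ≤ 2/ε := by
  have hTα : 0 < T^α := Real.rpow_pos_of_pos hT α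
  have h2α : (T/2)^α = T^α/2^α := Real.div_rpow hT.le (by norm_num : (0:ℝ) ≤ 2) α
  have h2p : (0:ℝ) < 2^α := Real.rpow_pos_of_pos (by norm_num) α
  have h2le : (2:ℝ)^α ≤ 2 := by
    have := Real.rpow_le_rpow_of_exponent_le (by norm_num : (1:ℝ) ≤ 2) (le_of_lt hα.2)
    rwa [Real.rpow_one] at this
  have e : T^α/((T/2)^α*ε) = 2^α/ε := by
    rw [h2α]; field_simp
  rw [e]
  exact div_le_div_of_nonneg_right h2le hε.le

lemma Pop_lower (hα : α ∈ Ioo (0:ℝ) 1) (H : IsAdmissibleDensity α h)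
    (hT : 0 < T) (μ : Measure (RN N)) (z : RN N)
    {x : RN N} (hx : x ∈ ball z (T^(α/2))) {t : ℝ} (ht1 : T/2 ≤ t) (ht2 : t ≤ T) :
    ENNReal.ofReal ((Real.Gamma (1+α))⁻¹/(2*AA α) *
        ((4*Real.pi*(T^α*AA α)) ^ (-(N:ℝ)/2) * Real.exp (-(2/epsA α))))
      * μ (ball z (T^(α/2))) ≤ Pop N α h t μ x := by
  set σ := T^(α/2) with hσdef
  set ε := epsA α with hεdef
  set A := AA α with hAdef
  have hεp : 0 < ε := epsA_pos hα.1
  have hσnn : 0 ≤ σ := Real.rpow_nonneg hT.le _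
  have hσ2 : σ^2 = T^α := sigma_sq hT
  set C : ℝ≥0∞ := ENNReal.ofReal ((4*Real.pi*(T^α*A)) ^ (-(N:ℝ)/2) * Real.exp (-(2/ε)))
    with hC
  have key : ∀ θ ∈ Ioc ε A, C * μ (ball z σ) ≤ heatSG N (t^α*θ) μ x := by
    intro θ hθ
    have step1 : ∫⁻ y in ball z σ, ENNReal.ofReal (heatKernel N (t^α*θ) (x-y)) ∂μ
        ≤ heatSG N (t^α*θ) μ x := setLIntegral_le_lintegral _ _
    refine le_trans ?_ step1
    have step2 : ∀ᵐ y ∂(μ.restrict (ball z σ)),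
        C ≤ ENNReal.ofReal (heatKernel N (t^α*θ) (x-y)) := by
      refine (ae_restrict_mem measurableSet_ball).mono fun y hy => ?_
      rw [hC]
      refine ENNReal.ofReal_le_ofReal ?_
      refine kernel_main N hα hT (by linarith : (0:ℝ) < T/2) ht1 ht2 hεp hθ hσnn hσ2
        (hX_base hα hT hεp) ?_
      have hd : dist x y ≤ dist x z + dist y z := dist_triangle_right x y z
      rw [← dist_eq_norm]
      calc dist x y ≤ dist x z + dist y z := hd
      _ ≤ 2*σ := by
          have h1 := mem_ball.1 hx
          have h2 := mem_ball.1 hy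
          linarith
    calc C * μ (ball z σ) = ∫⁻ _ in ball z σ, C ∂μ := (setLIntegral_const _ _).symm
    _ ≤ _ := lintegral_mono_ae step2
  have sub : Ioc ε A ⊆ Ioi (0:ℝ) := fun θ hθ => lt_trans hεp hθ.1
  calc ENNReal.ofReal ((Real.Gamma (1+α))⁻¹/(2*A) *
        ((4*Real.pi*(T^α*A)) ^ (-(N:ℝ)/2) * Real.exp (-(2/ε)))) * μ (ball z σ)
      = ENNReal.ofReal ((Real.Gamma (1+α))⁻¹/(2*A)) * (C * μ (ball z σ)) := by
        have hnn : (0:ℝ) ≤ (Real.Gamma (1+α))⁻¹/(2*A) :=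
          (div_pos (m1_pos hα.1) (by linarith [AA_ge_one α] : (0:ℝ) < 2*A)).le
        rw [hC, ENNReal.ofReal_mul hnn]
        ring
    _ ≤ (∫⁻ θ in Ioc ε A, ENNReal.ofReal (h θ)) * (C * μ (ball z σ)) :=
        mul_le_mul_left (midmassL0 H hα) _
    _ = ∫⁻ θ in Ioc ε A, ENNReal.ofReal (h θ) * (C * μ (ball z σ)) := by
        exact (lintegral_mul_const _ (H.measurable.ennreal_ofReal)).symm
    _ ≤ ∫⁻ θ in Ioc ε A, ENNReal.ofReal (h θ) * heatSG N (t^α*θ) μ x := by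
        refine lintegral_mono_ae ((ae_restrict_mem measurableSet_Ioc).mono fun θ hθ => ?_)
        exact mul_le_mul_right (key θ hθ) _
    _ ≤ Pop N α h t μ x := lintegral_mono_set sub

end Lower

section Lower2
variable {N : ℕ} {α : ℝ} {h : ℝ → ℝ} {T : ℝ}

lemma AA_pos (α : ℝ) : 0 < AA α := lt_of_lt_of_le one_pos (AA_ge_one α)

lemma Sop_lower (hα : α ∈ Ioo (0:ℝ) 1) (H : IsAdmissibleDensity α h)
    (hT : 0 < T) (z : RN N) {x : RN N} (hx : x ∈ ball z (T^(α/2)))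
    {f : RN N → ℝ≥0∞} {b : ℝ} (hb : 0 < b)
    (hf : ∀ᵐ y ∂(volume.restrict (ball z (T^(α/2)))), ENNReal.ofReal b ≤ f y)
    {p' : ℝ} (hp' : 0 ≤ p')
    {τ τ0 X : ℝ} (hτ0 : 0 < τ0) (hτ1 : τ0 ≤ τ) (hτ2 : τ ≤ T)
    (hX : T^α/(τ0^α*epsA α) ≤ X) :
    ENNReal.ofReal ((Real.Gamma (1+α))⁻¹/2 *
        ((4*Real.pi*(T^α*AA α)) ^ (-(N:ℝ)/2) * Real.exp (-X)) * b^p')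
      * volume (ball z (T^(α/2))) ≤ Sop N α h τ (fun y => f y ^ p') x := by
  set σ := T^(α/2) with hσdef
  set ε := epsA α with hεdef
  set A := AA α with hAdef
  have hεp : 0 < ε := epsA_pos hα.1
  have hAp : 0 < A := AA_pos α
  have hσnn : 0 ≤ σ := Real.rpow_nonneg hT.le _
  have hσ2 : σ^2 = T^α := sigma_sq hT
  have hTα : 0 < T^α := Real.rpow_pos_of_pos hT α
  have hKp : (0:ℝ) < (4*Real.pi*(T^α*A)) ^ (-(N:ℝ)/2) :=
    Real.rpow_pos_of_pos (by positivity) _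
  set KpE : ℝ := (4*Real.pi*(T^α*A)) ^ (-(N:ℝ)/2) * Real.exp (-X) with hKpE
  have hKpEp : 0 < KpE := mul_pos hKp (Real.exp_pos _)
  set C : ℝ≥0∞ := ENNReal.ofReal (KpE * b^p') with hC
  have key : ∀ θ ∈ Ioc ε A, C * volume (ball z σ)
      ≤ ∫⁻ y, ENNReal.ofReal (heatKernel N (τ^α*θ) (x-y)) * f y ^ p' := by
    intro θ hθ
    refine le_trans ?_ (setLIntegral_le_lintegral (ball z σ) _)
    have step2 : ∀ᵐ y ∂(volume.restrict (ball z σ)),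
        C ≤ ENNReal.ofReal (heatKernel N (τ^α*θ) (x-y)) * f y ^ p' := by
      refine ((ae_restrict_mem measurableSet_ball).and hf).mono fun y hy => ?_
      have hker : (4*Real.pi*(T^α*A)) ^ (-(N:ℝ)/2) * Real.exp (-X)
          ≤ heatKernel N (τ^α*θ) (x-y) := by
        refine kernel_main N hα hT hτ0 hτ1 hτ2 hεp hθ hσnn hσ2 hX ?_
        rw [← dist_eq_norm]
        calc dist x y ≤ dist x z + dist y z := dist_triangle_right x y z
        _ ≤ 2*σ := by
            have h1 := mem_ball.1 hx
            have h2 := mem_ball.1 hy.1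
            linarith
      calc C = ENNReal.ofReal KpE * ENNReal.ofReal (b^p') := by
            rw [hC, ENNReal.ofReal_mul hKpEp.le]
      _ = ENNReal.ofReal KpE * (ENNReal.ofReal b) ^ p' := by
            rw [ENNReal.ofReal_rpow_of_pos hb]
      _ ≤ ENNReal.ofReal (heatKernel N (τ^α*θ) (x-y)) * f y ^ p' :=
            mul_le_mul' (ENNReal.ofReal_le_ofReal hker) (ENNReal.rpow_le_rpow hy.2 hp')
    calc C * volume (ball z σ) = ∫⁻ _ in ball z σ, C := (setLIntegral_const _ _).symm
    _ ≤ _ := lintegral_mono_ae step2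
  have sub : Ioc ε A ⊆ Ioi (0:ℝ) := fun θ hθ => lt_trans hεp hθ.1
  calc ENNReal.ofReal ((Real.Gamma (1+α))⁻¹/2 * KpE * b^p') * volume (ball z σ)
      = ENNReal.ofReal ((Real.Gamma (1+α))⁻¹/2) * (C * volume (ball z σ)) := by
        have hnn : (0:ℝ) ≤ (Real.Gamma (1+α))⁻¹/2 := by linarith [m1_pos hα.1]
        rw [hC, show (Real.Gamma (1+α))⁻¹/2 * KpE * b^p'
            = (Real.Gamma (1+α))⁻¹/2 * (KpE * b^p') from by ring,
          ENNReal.ofReal_mul hnn, mul_assoc]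
    _ ≤ (∫⁻ θ in Ioc ε A, ENNReal.ofReal (θ * h θ)) * (C * volume (ball z σ)) :=
        mul_le_mul_left (midmassL1 H hα) _
    _ = ∫⁻ θ in Ioc ε A, ENNReal.ofReal (θ * h θ) * (C * volume (ball z σ)) :=
        (lintegral_mul_const _ ((measurable_id.mul H.measurable).ennreal_ofReal)).symm
    _ ≤ ∫⁻ θ in Ioc ε A, ENNReal.ofReal (θ * h θ) *
          ∫⁻ y, ENNReal.ofReal (heatKernel N (τ^α*θ) (x-y)) * f y ^ p' := by
        refine lintegral_mono_ae ((ae_restrict_mem measurableSet_Ioc).mono fun θ hθ => ?_)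
        exact mul_le_mul_right (key θ hθ) _
    _ ≤ Sop N α h τ (fun y => f y ^ p') x := lintegral_mono_set sub

end Lower2

section Step
variable {N : ℕ} {α : ℝ} {h : ℝ → ℝ} {T : ℝ}

lemma step_lemma (hα : α ∈ Ioo (0:ℝ) 1) (H : IsAdmissibleDensity α h)
    (hT : 0 < T) (μ : Measure (RN N)) (z : RN N)
    {u : ℝ → RN N → ℝ≥0∞} (husol : IsSolution N α (1+2/(N:ℝ)) h μ T u)
    {a g b : ℝ} (ha : T/2 ≤ a) (hg : 0 < g) (hag : a + g ≤ T) (hb : 0 < b)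
    (Qk : ∀ᵐ s ∂(volume.restrict (Ioo a T)), ∀ᵐ y ∂(volume.restrict (ball z (T^(α/2)))),
      ENNReal.ofReal b ≤ u s y) :
    ∀ᵐ t ∂(volume.restrict (Ioo (a+g) T)), ∀ᵐ x ∂(volume.restrict (ball z (T^(α/2)))),
      ENNReal.ofReal (α * (T^(α-1) * (g/2 * ((Real.Gamma (1+α))⁻¹/2 *
          ((4*Real.pi*(T^α*AA α)) ^ (-(N:ℝ)/2) *
            Real.exp (-(T^α/((g/2)^α*epsA α)))) * b^(1+2/(N:ℝ))))))
        * volume (ball z (T^(α/2))) ≤ u t x := by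
  obtain ⟨humeas, hae⟩ := husol
  set σ := T^(α/2) with hσdef
  set p : ℝ := 1+2/(N:ℝ) with hpdef
  have hp0 : 0 ≤ p := by
    rw [hpdef]; positivity
  set Z : ℝ := (Real.Gamma (1+α))⁻¹/2 *
      ((4*Real.pi*(T^α*AA α)) ^ (-(N:ℝ)/2) * Real.exp (-(T^α/((g/2)^α*epsA α)))) * b^p
    with hZ
  have hZnn : 0 ≤ Z := by
    have h1 := m1_pos hα.1
    have h2 : (0:ℝ) < (4*Real.pi*(T^α*AA α)) ^ (-(N:ℝ)/2) := by
      have := AA_pos α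
      have := Real.rpow_pos_of_pos hT α
      exact Real.rpow_pos_of_pos (by positivity) _
    have h3 : (0:ℝ) ≤ b^p := Real.rpow_nonneg hb.le _
    positivity
  have hsub : Ioo (a+g) T ⊆ Ioc 0 T := fun t ht => ⟨by linarith [ht.1], ht.2.le⟩
  filter_upwards [ae_restrict_of_ae_restrict_of_subset hsub hae,
    ae_restrict_mem measurableSet_Ioo] with t hPt htW
  filter_upwards [ae_restrict_of_ae hPt, ae_restrict_mem measurableSet_ball]
    with x hx hxball
  rw [hx.2]
  set J := Ioo a (a + g/2) with hJ
  have hJsub : J ⊆ Ioo 0 t := fun s hs => ⟨by linarith [hs.1], by linarith [hs.2, htW.1]⟩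
  have hJsub2 : J ⊆ Ioo a T := fun s hs => ⟨hs.1, by linarith [hs.2]⟩
  set C0 : ℝ≥0∞ := ENNReal.ofReal (T^(α-1)) * (ENNReal.ofReal Z * volume (ball z σ))
    with hC0
  have hptws : ∀ᵐ s ∂(volume.restrict J),
      C0 ≤ ENNReal.ofReal ((t-s)^(α-1)) * Sop N α h (t-s) (fun y => u s y ^ p) x := by
    filter_upwards [ae_restrict_of_ae_restrict_of_subset hJsub2 Qk,
      ae_restrict_mem measurableSet_Ioo] with s hsQ hsJ
    have hts1 : g/2 ≤ t-s := by
      have := hsJ.2; have := htW.1; linarith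
    have hts2 : t-s ≤ T := by
      have := hsJ.1; have := htW.2; linarith
    refine mul_le_mul' ?_ ?_
    · refine ENNReal.ofReal_le_ofReal ?_
      rw [show α-1 = -(1-α) by ring]
      exact rpow_neg_anti (by linarith : (0:ℝ) < t-s) hts2 (by linarith [hα.2])
    · have := Sop_lower (N := N) hα H hT z hxball hb hsQ hp0
        (by linarith : (0:ℝ) < g/2) hts1 hts2 (le_refl (T^α/((g/2)^α*epsA α)))
      rw [hZ]
      exact this
  have hs_int : C0 * ENNReal.ofReal (g/2)
      ≤ ∫⁻ s in Ioo (0:ℝ) t, ENNReal.ofReal ((t-s)^(α-1)) *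
          Sop N α h (t-s) (fun y => u s y ^ p) x := by
    refine le_trans ?_ (lintegral_mono_set hJsub)
    have e : volume J = ENNReal.ofReal (g/2) := by
      rw [hJ, Real.volume_Ioo]; ring_nf
    calc C0 * ENNReal.ofReal (g/2) = ∫⁻ _ in J, C0 := by rw [setLIntegral_const, e]
    _ ≤ _ := lintegral_mono_ae hptws
  refine le_trans ?_ le_add_self
  have etarget : ENNReal.ofReal (α * (T^(α-1) * (g/2 * Z))) * volume (ball z σ)
      = ENNReal.ofReal α * (C0 * ENNReal.ofReal (g/2)) := by
    rw [hC0]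
    rw [ENNReal.ofReal_mul hα.1.le, ENNReal.ofReal_mul (Real.rpow_nonneg hT.le _),
      ENNReal.ofReal_mul (by linarith : (0:ℝ) ≤ g/2)]
    ring
  rw [etarget]
  exact mul_le_mul_right hs_int _

end Step

section Div

lemma bernoulli_pow {r : ℝ} (hr : 1 ≤ r) (k : ℕ) : (k:ℝ) * (r - 1) ≤ r^k := by
  have h := one_add_mul_le_pow (a := r - 1) (by linarith) k
  rw [show 1 + (r-1) = r by ring] at h
  linarith

lemma div_lemma {p r J : ℝ} (hr : 1 < r) (hrp : r < p) (hJ : 0 ≤ J)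
    {c : ℕ → ℝ} (hc0 : 0 < c 0)
    (hrec : ∀ k, Real.exp (-(J * r^k)) * (c k)^p ≤ c (k+1))
    (hbig : J/(p-r) + 1 ≤ Real.log (c 0)) :
    (∀ k, 0 < c k) ∧ ∀ k, Real.exp ((p:ℝ)^k) ≤ c k := by
  have hp1 : 1 < p := lt_trans hr hrp
  have hpr : 0 < p - r := by linarith
  have hB : J/(p-r) * (p-r) = J := div_mul_cancel₀ J hpr.ne'
  set B := J/(p-r) with hBdef
  have hBnn : 0 ≤ B := div_nonneg hJ hpr.le
  have hpos : ∀ k, 0 < c k := by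
    intro k
    induction k with
    | zero => exact hc0
    | succ n ih =>
      refine lt_of_lt_of_le ?_ (hrec n)
      exact mul_pos (Real.exp_pos _) (Real.rpow_pos_of_pos ih p)
  have main : ∀ k, B * r^k + p^k ≤ Real.log (c k) := by
    intro k
    induction k with
    | zero => simpa using hbig
    | succ n ih =>
      have hlog : Real.log (Real.exp (-(J * r^n)) * (c n)^p) ≤ Real.log (c (n+1)) :=
        Real.log_le_log (mul_pos (Real.exp_pos _) (Real.rpow_pos_of_pos (hpos n) p))
          (hrec n)
      rw [Real.log_mul (Real.exp_ne_zero _) (Real.rpow_pos_of_pos (hpos n) p).ne',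
        Real.log_exp, Real.log_rpow (hpos n)] at hlog
      have h2 : -(J * r^n) + p * (B * r^n + p^n) ≤ -(J * r^n) + p * Real.log (c n) := by
        have := mul_le_mul_of_nonneg_left ih (by linarith : (0:ℝ) ≤ p)
        linarith
      have h3 : B * r^(n+1) + p^(n+1) = -(J * r^n) + p * (B * r^n + p^n) := by
        rw [pow_succ, pow_succ]
        linear_combination (-(r^n)) * hB
      linarith
  refine ⟨hpos, fun k => ?_⟩
  have h1 : (p:ℝ)^k ≤ Real.log (c k) := by
    have := main k
    nlinarith [pow_nonneg (by linarith : (0:ℝ) ≤ r) k]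
  calc Real.exp ((p:ℝ)^k) ≤ Real.exp (Real.log (c k)) := Real.exp_le_exp.2 h1
  _ = c k := Real.exp_log (hpos k)

end Div

def m1c (α : ℝ) : ℝ := (Real.Gamma (1+α))⁻¹
def omegaN (N : ℕ) : ℝ := (volume (ball (0 : RN N) 1)).toReal
def pc (N : ℕ) : ℝ := 1 + 2/(N:ℝ)
def qc (N : ℕ) (α : ℝ) : ℝ := (pc N) ^ (-(1/(2*α)))
def rc (N : ℕ) : ℝ := (pc N) ^ ((1:ℝ)/2)
def KAc (N : ℕ) (α : ℝ) : ℝ := (4*Real.pi*AA α) ^ (-(N:ℝ)/2)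
def D0c (N : ℕ) (α : ℝ) : ℝ := m1c α/(2*AA α) * (KAc N α * Real.exp (-(2/epsA α)))
def Dc (N : ℕ) (α : ℝ) : ℝ := α * (1-qc N α) * m1c α * KAc N α * omegaN N / 16
def rho0c (N : ℕ) (α : ℝ) : ℝ := (8/(1-qc N α))^α / epsA α
def Jc (N : ℕ) (α : ℝ) : ℝ :=
  |Real.log (Dc N α)| + Real.log (1/qc N α)/(rc N - 1) + rho0c N α
def Thetac (N : ℕ) (α : ℝ) : ℝ := Real.exp (Jc N α/(pc N - rc N) + 1) / D0c N α
def cseq (N : ℕ) (α M : ℝ) : ℕ → ℝ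
  | 0 => D0c N α * M
  | (k+1) => Dc N α * (qc N α)^k * Real.exp (-(rho0c N α * (rc N)^k)) * (cseq N α M k)^(pc N)

section Consts
variable {N : ℕ} {α : ℝ}

lemma pc_gt_one (hN : 1 ≤ N) : 1 < pc N := by
  have : (0:ℝ) < (N:ℝ) := by exact_mod_cast Nat.pos_of_ne_zero (by omega)
  have : (0:ℝ) < 2/(N:ℝ) := by positivity
  unfold pc; linarith

lemma qc_pos (hN : 1 ≤ N) : 0 < qc N α :=
  Real.rpow_pos_of_pos (by linarith [pc_gt_one hN]) _

lemma qc_lt_one (hN : 1 ≤ N) (hα : 0 < α) : qc N α < 1 :=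
  Real.rpow_lt_one_of_one_lt_of_neg (pc_gt_one hN)
    (neg_lt_zero.2 (by positivity : (0:ℝ) < 1/(2*α)))

lemma rc_gt_one (hN : 1 ≤ N) : 1 < rc N := by
  unfold rc
  rw [show (1:ℝ) = (pc N) ^ (0:ℝ) by rw [Real.rpow_zero]]
  exact Real.rpow_lt_rpow_of_exponent_lt (pc_gt_one hN) (by norm_num)

lemma rc_lt_pc (hN : 1 ≤ N) : rc N < pc N := by
  have h := Real.rpow_lt_rpow_of_exponent_lt (pc_gt_one hN)
    (by norm_num : (1:ℝ)/2 < 1)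
  unfold rc
  calc pc N ^ ((1:ℝ)/2) < pc N ^ (1:ℝ) := h
  _ = pc N := Real.rpow_one _

lemma qc_rpow_alpha (hN : 1 ≤ N) (hα : 0 < α) : (qc N α) ^ α = (rc N)⁻¹ := by
  have hp0 : (0:ℝ) ≤ pc N := by linarith [pc_gt_one hN]
  unfold qc rc
  rw [← Real.rpow_mul hp0]
  rw [show -(1/(2*α)) * α = -((1:ℝ)/2) by field_simp]
  rw [Real.rpow_neg hp0]

lemma omegaN_pos (hN : 1 ≤ N) : 0 < omegaN N := by
  unfold omegaN
  refine ENNReal.toReal_pos ?_ measure_ball_lt_top.ne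
  exact (measure_ball_pos volume (0 : RN N) one_pos).ne'

end Consts

section Alg
variable {N : ℕ} {α T : ℝ}

lemma alg_base (hα : α ∈ Ioo (0:ℝ) 1) (hT : 0 < T) (M : ℝ) :
    D0c N α * M * (T^α)^(-(N:ℝ)/2)
      = ((Real.Gamma (1+α))⁻¹/(2*AA α) *
          ((4*Real.pi*(T^α*AA α)) ^ (-(N:ℝ)/2) * Real.exp (-(2/epsA α)))) * M := by
  have hA : 0 < AA α := AA_pos α
  have hY : (0:ℝ) < T^α := Real.rpow_pos_of_pos hT α
  rw [show 4*Real.pi*(T^α*AA α) = (4*Real.pi*AA α)*(T^α) by ring,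
    Real.mul_rpow (by positivity) hY.le]
  unfold D0c KAc m1c
  ring

lemma alg_step (hN : 1 ≤ N) (hα : α ∈ Ioo (0:ℝ) 1) (hT : 0 < T) {cp : ℝ}
    (hc : 0 ≤ cp) (k : ℕ) :
    α * (T^(α-1) * ((T/4*(1-qc N α)*(qc N α)^k)/2 * ((Real.Gamma (1+α))⁻¹/2 *
        ((4*Real.pi*(T^α*AA α)) ^ (-(N:ℝ)/2) *
          Real.exp (-(T^α/(((T/4*(1-qc N α)*(qc N α)^k)/2)^α*epsA α)))) *
        (cp * (T^α)^(-(N:ℝ)/2))^(pc N)))) * ((T^(α/2))^N * omegaN N)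
    = (Dc N α * (qc N α)^k * Real.exp (-(rho0c N α * (rc N)^k)) * cp^(pc N))
        * (T^α)^(-(N:ℝ)/2) := by
  have hA : 0 < AA α := AA_pos α
  have hY : (0:ℝ) < T^α := Real.rpow_pos_of_pos hT α
  have hq0 : 0 < qc N α := qc_pos hN
  have hq1 : qc N α < 1 := qc_lt_one hN hα.1
  have hε : 0 < epsA α := epsA_pos hα.1
  have hrc : 0 < rc N := by linarith [rc_gt_one (N := N) hN]
  have hNne : ((N:ℝ)) ≠ 0 := by
    have : (0:ℝ) < (N:ℝ) := by exact_mod_cast Nat.pos_of_ne_zero (by omega)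
    exact this.ne'
  set q := qc N α with hqdef
  -- rewrite the kernel prefactor
  rw [show 4*Real.pi*(T^α*AA α) = (4*Real.pi*AA α)*(T^α) by ring,
    Real.mul_rpow (by positivity) hY.le]
  -- rewrite the gap
  rw [show (T/4*(1-q)*q^k)/2 = T/8*((1-q)*q^k) by ring]
  -- exponential argument
  have e3 : (q^k)^α = ((rc N)^k)⁻¹ := by
    rw [← Real.rpow_natCast q k, ← Real.rpow_mul hq0.le, mul_comm,
      Real.rpow_mul hq0.le, Real.rpow_natCast, qc_rpow_alpha hN hα.1, inv_pow]
  have h8 : (T/8*((1-q)*q^k))^α = T^α/8^α * ((1-q)^α * ((rc N)^k)⁻¹) := by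
    rw [Real.mul_rpow (by positivity) (mul_nonneg (by linarith) (pow_nonneg hq0.le k)),
      Real.mul_rpow (by linarith) (pow_nonneg hq0.le k),
      Real.div_rpow hT.le (by norm_num), e3]
  have h8p : (0:ℝ) < (8:ℝ)^α := Real.rpow_pos_of_pos (by norm_num) α
  have h1q : (0:ℝ) < (1-q)^α := Real.rpow_pos_of_pos (by linarith) α
  have e2 : T^α/((T/8*((1-q)*q^k))^α*epsA α) = rho0c N α * (rc N)^k := by
    rw [h8]
    unfold rho0c
    rw [Real.div_rpow (by norm_num : (0:ℝ) ≤ 8) (by linarith : (0:ℝ) ≤ 1-q)]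
    field_simp
  rw [e2]
  -- the power of b
  have e4 : (cp * (T^α)^(-(N:ℝ)/2))^(pc N)
      = cp^(pc N) * (T^α)^(-(N:ℝ)/2*pc N) := by
    rw [Real.mul_rpow hc (Real.rpow_nonneg hY.le _), ← Real.rpow_mul hY.le]
  rw [e4]
  -- the volume factor
  have e5 : (T^(α/2))^N = (T^α)^((N:ℝ)/2) := by
    rw [show T^(α/2) = (T^α)^((1:ℝ)/2) by
      rw [← Real.rpow_mul hT.le, show α*((1:ℝ)/2) = α/2 by ring]]
    rw [← Real.rpow_natCast ((T^α)^((1:ℝ)/2)) N, ← Real.rpow_mul hY.le]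
    rw [show (1:ℝ)/2*(N:ℝ) = (N:ℝ)/2 by ring]
  rw [e5]
  -- collapse the powers of T
  have EY : T^(α-1) * (T * ((T^α)^(-(N:ℝ)/2) * ((T^α)^(-(N:ℝ)/2*pc N) * (T^α)^((N:ℝ)/2))))
      = (T^α)^(-(N:ℝ)/2) := by
    have h1 : ∀ s : ℝ, (T^α)^s = T^(α*s) := fun s => (Real.rpow_mul hT.le α s).symm
    simp only [h1]
    calc T^(α-1) * (T * (T^(α*(-(N:ℝ)/2)) * (T^(α*(-(N:ℝ)/2*pc N)) * T^(α*((N:ℝ)/2)))))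
        = (T^(α-1) * T^(1:ℝ)) *
            (T^(α*(-(N:ℝ)/2)) * (T^(α*(-(N:ℝ)/2*pc N)) * T^(α*((N:ℝ)/2)))) := by
          rw [Real.rpow_one]; ring
      _ = T^((α-1)+1) * T^(α*(-(N:ℝ)/2) + (α*(-(N:ℝ)/2*pc N) + α*((N:ℝ)/2))) := by
          rw [← Real.rpow_add hT, ← Real.rpow_add hT, ← Real.rpow_add hT]
      _ = T^(((α-1)+1) + (α*(-(N:ℝ)/2) + (α*(-(N:ℝ)/2*pc N) + α*((N:ℝ)/2)))) :=
          (Real.rpow_add hT _ _).symm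
      _ = T^(α*(-(N:ℝ)/2)) := by
          congr 1
          unfold pc
          field_simp
          ring
  calc α * (T^(α-1) * (T/8*((1-q)*q^k) * ((Real.Gamma (1+α))⁻¹/2 *
        ((4*Real.pi*AA α)^(-(N:ℝ)/2) * (T^α)^(-(N:ℝ)/2) *
          Real.exp (-(rho0c N α * (rc N)^k))) *
        (cp^(pc N) * (T^α)^(-(N:ℝ)/2*pc N))))) * ((T^α)^((N:ℝ)/2) * omegaN N)
      = (α * ((Real.Gamma (1+α))⁻¹) * (4*Real.pi*AA α)^(-(N:ℝ)/2) * ((1-q)*q^k/16) *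
          cp^(pc N) * Real.exp (-(rho0c N α * (rc N)^k)) * omegaN N) *
        (T^(α-1) * (T * ((T^α)^(-(N:ℝ)/2) * ((T^α)^(-(N:ℝ)/2*pc N) * (T^α)^((N:ℝ)/2))))) := by
        ring
    _ = (Dc N α * q^k * Real.exp (-(rho0c N α * (rc N)^k)) * cp^(pc N))
        * (T^α)^(-(N:ℝ)/2) := by
        rw [EY]
        unfold Dc KAc m1c
        rw [← hqdef]
        ring

end Alg

section Pos
variable {N : ℕ} {α : ℝ}

lemma KAc_pos (N : ℕ) (α : ℝ) : 0 < KAc N α := by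
  have := AA_pos α
  exact Real.rpow_pos_of_pos (by positivity) _

lemma D0c_pos (hN : 1 ≤ N) (hα : α ∈ Ioo (0:ℝ) 1) : 0 < D0c N α := by
  have h1 := m1_pos hα.1
  have h2 := AA_pos α
  have h3 := KAc_pos N α
  unfold D0c m1c
  positivity

lemma Dc_pos (hN : 1 ≤ N) (hα : α ∈ Ioo (0:ℝ) 1) : 0 < Dc N α := by
  have h1 := m1_pos hα.1
  have h2 := KAc_pos N α
  have h3 := omegaN_pos (N := N) hN
  have h4 : qc N α < 1 := qc_lt_one hN hα.1
  have h5 : (0:ℝ) < 1 - qc N α := by linarith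
  unfold Dc m1c
  have h6 := hα.1
  positivity

lemma rho0c_nonneg (hN : 1 ≤ N) (hα : α ∈ Ioo (0:ℝ) 1) : 0 ≤ rho0c N α := by
  unfold rho0c
  have h4 : qc N α < 1 := qc_lt_one hN hα.1
  have := epsA_pos hα.1
  have h5 : (0:ℝ) < 1 - qc N α := by linarith
  have h6 : (0:ℝ) ≤ (8/(1-qc N α))^α := Real.rpow_nonneg (by positivity) _
  positivity

lemma Jc_nonneg (hN : 1 ≤ N) (hα : α ∈ Ioo (0:ℝ) 1) : 0 ≤ Jc N α := by
  unfold Jc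
  have h1 : 0 ≤ Real.log (1/qc N α) := by
    refine Real.log_nonneg ?_
    rw [le_div_iff₀ (qc_pos hN)]
    linarith [qc_lt_one hN hα.1]
  have h2 : 0 < rc N - 1 := by linarith [rc_gt_one (N := N) hN]
  have h3 := rho0c_nonneg hN hα
  positivity

lemma Thetac_pos (hN : 1 ≤ N) (hα : α ∈ Ioo (0:ℝ) 1) : 0 < Thetac N α :=
  div_pos (Real.exp_pos _) (D0c_pos hN hα)

lemma rec_bound (hN : 1 ≤ N) (hα : α ∈ Ioo (0:ℝ) 1) (k : ℕ) :
    Real.exp (-(Jc N α * (rc N)^k))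
      ≤ Dc N α * (qc N α)^k * Real.exp (-(rho0c N α * (rc N)^k)) := by
  have hD := Dc_pos hN hα
  have hq0 := qc_pos (α := α) hN
  have hq1 := qc_lt_one hN hα.1
  have hr1 : 1 < rc N := rc_gt_one hN
  set d := Real.log (Dc N α) with hd
  set L := Real.log (1/qc N α) with hL
  have hLnn : 0 ≤ L := by
    refine Real.log_nonneg ?_
    rw [le_div_iff₀ hq0]; linarith
  have hLq : Real.log (qc N α) = -L := by
    rw [hL, one_div, Real.log_inv]; ring
  have hRk1 : (1:ℝ) ≤ (rc N)^k := one_le_pow₀ hr1.le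
  have hkr : (k:ℝ) * (rc N - 1) ≤ (rc N)^k := by
    have := bernoulli_pow (le_of_lt hr1) k
    linarith
  have hrho := rho0c_nonneg hN hα
  have hqpow : Real.exp ((k:ℝ)*(-L)) = (qc N α)^k := by
    rw [← hLq, ← Real.log_pow, Real.exp_log (pow_pos hq0 k)]
  have eRHS : Dc N α * (qc N α)^k * Real.exp (-(rho0c N α * (rc N)^k))
      = Real.exp (d + (k:ℝ)*(-L) + -(rho0c N α * (rc N)^k)) := by
    rw [Real.exp_add, Real.exp_add, Real.exp_log hD, hqpow]
  rw [eRHS]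
  refine Real.exp_le_exp.2 ?_
  have hB : (k:ℝ)*L ≤ L/(rc N - 1)*(rc N)^k := by
    rw [div_mul_eq_mul_div, le_div_iff₀ (by linarith : (0:ℝ) < rc N - 1)]
    nlinarith [mul_le_mul_of_nonneg_right hkr hLnn]
  have hA2 : -(|d| * (rc N)^k) ≤ d := by
    nlinarith [neg_abs_le d, abs_nonneg d]
  have hJ : Jc N α = |d| + L/(rc N -1) + rho0c N α := rfl
  rw [hJ]
  nlinarith [mul_nonneg hrho (by positivity : (0:ℝ) ≤ (rc N)^k)]

end Pos

lemma cseq_pos {N : ℕ} {α : ℝ} (hN : 1 ≤ N) (hα : α ∈ Ioo (0:ℝ) 1) {M : ℝ}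
    (hM : 0 < M) : ∀ k, 0 < cseq N α M k := by
  intro k
  induction k with
  | zero => exact mul_pos (D0c_pos hN hα) hM
  | succ n ih =>
    show 0 < Dc N α * (qc N α)^n * Real.exp (-(rho0c N α * (rc N)^n))
        * (cseq N α M n)^(pc N)
    exact mul_pos (mul_pos (mul_pos (Dc_pos hN hα) (pow_pos (qc_pos hN) n))
      (Real.exp_pos _)) (Real.rpow_pos_of_pos ih _)

lemma key_bound {N : ℕ} {α : ℝ} {h : ℝ → ℝ} {T : ℝ}
    (hN : 1 ≤ N) (hα : α ∈ Ioo (0:ℝ) 1) (H : IsAdmissibleDensity α h)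
    (hT : 0 < T) (μ : Measure (RN N)) [IsLocallyFiniteMeasure μ] (z : RN N)
    {u : ℝ → RN N → ℝ≥0∞} (husol : IsSolution N α (1+2/(N:ℝ)) h μ T u) :
    μ (ball z (T^(α/2))) ≤ ENNReal.ofReal (Thetac N α) := by
  haveI : Nonempty (Fin N) := ⟨⟨0, by omega⟩⟩
  set σ := T^(α/2) with hσdef
  have hσpos : 0 < σ := Real.rpow_pos_of_pos hT _
  have hfin : μ (ball z σ) ≠ ∞ := ((measure_mono ball_subset_closedBall).trans_lt
    (isCompact_closedBall z σ).measure_lt_top).ne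
  by_contra hcon
  push_neg at hcon
  set M := (μ (ball z σ)).toReal with hMdef
  have hμball : μ (ball z σ) = ENNReal.ofReal M := (ENNReal.ofReal_toReal hfin).symm
  have hΘM : Thetac N α < M := by
    by_contra hle
    push_neg at hle
    rw [hμball] at hcon
    exact absurd hcon (not_lt.2 (ENNReal.ofReal_le_ofReal hle))
  have hMpos : 0 < M := lt_trans (Thetac_pos hN hα) hΘM
  have hY : (0:ℝ) < T^α := Real.rpow_pos_of_pos hT α
  set W : ℝ := (T^α)^(-(N:ℝ)/2) with hWdef
  have hW : 0 < W := Real.rpow_pos_of_pos hY _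
  set q := qc N α with hqdef
  have hq0 : 0 < q := qc_pos hN
  have hq1 : q < 1 := qc_lt_one hN hα.1
  set tau : ℕ → ℝ := fun k => T/2 + T/4*(1 - q^k) with htau
  have htau0 : ∀ k, T/2 ≤ tau k := by
    intro k
    have : q^k ≤ 1 := pow_le_one₀ hq0.le hq1.le
    simp only [htau]
    nlinarith
  have htau34 : ∀ k, tau k ≤ 3*T/4 := by
    intro k
    have : 0 ≤ q^k := pow_nonneg hq0.le k
    simp only [htau]
    nlinarith
  set c : ℕ → ℝ := cseq N α M with hcdef
  have hcpos : ∀ k, 0 < c k := cseq_pos hN hα hMpos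
  have hvol : volume (ball z σ) = ENNReal.ofReal (σ^N * omegaN N) := by
    rw [Measure.addHaar_ball volume z hσpos.le, finrank_euclideanSpace_fin,
      ENNReal.ofReal_mul (pow_nonneg hσpos.le N)]
    congr 1
    rw [omegaN, ENNReal.ofReal_toReal measure_ball_lt_top.ne]
  -- the inductive invariant
  have invariant : ∀ k, ∀ᵐ t ∂(volume.restrict (Ioo (tau k) T)),
      ∀ᵐ y ∂(volume.restrict (ball z σ)), ENNReal.ofReal (c k * W) ≤ u t y := by
    intro k
    induction k with
    | zero =>
      have htau0' : tau 0 = T/2 := by simp [htau]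
      rw [htau0']
      have hsub : Ioo (T/2) T ⊆ Ioc 0 T := fun t ht => ⟨by linarith [ht.1], ht.2.le⟩
      filter_upwards [ae_restrict_of_ae_restrict_of_subset hsub husol.2,
        ae_restrict_mem measurableSet_Ioo] with t hPt htW
      filter_upwards [ae_restrict_of_ae hPt, ae_restrict_mem measurableSet_ball]
        with x hx hxball
      have hPop := Pop_lower hα H hT μ z hxball htW.1.le htW.2.le
      have : ENNReal.ofReal (c 0 * W) = ENNReal.ofReal ((Real.Gamma (1+α))⁻¹/(2*AA α) *
          ((4*Real.pi*(T^α*AA α)) ^ (-(N:ℝ)/2) * Real.exp (-(2/epsA α))))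
          * μ (ball z σ) := by
        rw [hμball, ← ENNReal.ofReal_mul (by
          have h1 := m1_pos hα.1
          have h2 := AA_pos α
          have h3 : (0:ℝ) < (4*Real.pi*(T^α*AA α)) ^ (-(N:ℝ)/2) :=
            Real.rpow_pos_of_pos (by positivity) _
          positivity)]
        congr 1
        show cseq N α M 0 * W = _
        rw [show cseq N α M 0 = D0c N α * M from rfl, hWdef]
        exact alg_base hα hT M
      rw [this, hx.2]
      exact le_trans hPop (self_le_add_right _ _)
    | succ k ih =>
      set g : ℝ := T/4*(1-q)*q^k with hgdef
      have hg : 0 < g := by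
        have h1 := pow_pos hq0 k
        have h2 : (0:ℝ) < 1 - q := by linarith
        simp only [hgdef]
        positivity
      have hag : tau k + g = tau (k+1) := by
        simp only [htau, hgdef, pow_succ]
        ring
      have hagT : tau k + g ≤ T := by
        calc tau k + g = tau (k+1) := hag
        _ ≤ 3*T/4 := htau34 (k+1)
        _ ≤ T := by linarith
      have hstep := step_lemma hα H hT μ z ⟨husol.1, husol.2⟩ (htau0 k) hg hagT
        (mul_pos (hcpos k) hW) ih
      rw [hag] at hstep
      filter_upwards [hstep] with t hstep'
      filter_upwards [hstep'] with x hx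
      refine le_trans ?_ hx
      rw [hvol, ← ENNReal.ofReal_mul (by
        have h1 := m1_pos hα.1
        have h2 := AA_pos α
        have h3 : (0:ℝ) < (4*Real.pi*(T^α*AA α)) ^ (-(N:ℝ)/2) :=
          Real.rpow_pos_of_pos (by positivity) _
        have h4 : (0:ℝ) ≤ (c k * W)^(1+2/(N:ℝ)) :=
          Real.rpow_nonneg (mul_pos (hcpos k) hW).le _
        have h5 := hα.1
        have h6 : 0 ≤ T^(α-1) := Real.rpow_nonneg hT.le _
        have h7 : (0:ℝ) ≤ Real.exp (-(T^α/((g/2)^α*epsA α))) := (Real.exp_pos _).le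
        positivity)]
      refine ENNReal.ofReal_le_ofReal (le_of_eq ?_)
      have halg := alg_step (N := N) (T := T) hN hα hT (hcpos k).le k
      calc c (k+1) * W
          = (Dc N α * (qc N α)^k * Real.exp (-(rho0c N α * (rc N)^k))
              * (c k)^(pc N)) * (T^α)^(-(N:ℝ)/2) := rfl
      _ = α * (T^(α-1) * ((T/4*(1-qc N α)*(qc N α)^k)/2 * ((Real.Gamma (1+α))⁻¹/2 *
            ((4*Real.pi*(T^α*AA α)) ^ (-(N:ℝ)/2) *
              Real.exp (-(T^α/(((T/4*(1-qc N α)*(qc N α)^k)/2)^α*epsA α)))) *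
            (c k * (T^α)^(-(N:ℝ)/2))^(pc N)))) * ((T^(α/2))^N * omegaN N) := halg.symm
      _ = α * (T^(α-1) * (g/2 * ((Real.Gamma (1+α))⁻¹/2 *
            ((4*Real.pi*(T^α*AA α)) ^ (-(N:ℝ)/2) *
              Real.exp (-(T^α/((g/2)^α*epsA α)))) * (c k * W)^(1+2/(N:ℝ)))))
            * (σ^N * omegaN N) := rfl
  -- pass to the common window and derive a contradiction
  have hsubf : ∀ k, Ioo (3*T/4) T ⊆ Ioo (tau k) T :=
    fun k t ht => ⟨lt_of_le_of_lt (htau34 k) ht.1, ht.2⟩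
  have hallk : ∀ᵐ t ∂(volume.restrict (Ioo (3*T/4) T)), ∀ k,
      ∀ᵐ y ∂(volume.restrict (ball z σ)), ENNReal.ofReal (c k * W) ≤ u t y :=
    ae_all_iff.2 fun k => ae_restrict_of_ae_restrict_of_subset (hsubf k) (invariant k)
  have hfin' : ∀ᵐ t ∂(volume.restrict (Ioo (3*T/4) T)),
      ∀ᵐ x ∂(volume : Measure (RN N)), u t x < ∞ := by
    have hsub : Ioo (3*T/4) T ⊆ Ioc 0 T := fun t ht => ⟨by linarith [ht.1], ht.2.le⟩
    filter_upwards [ae_restrict_of_ae_restrict_of_subset hsub husol.2] with t hPt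
    filter_upwards [hPt] with x hx
    exact hx.1
  haveI hne1 : (ae (volume.restrict (Ioo (3*T/4) T))).NeBot := by
    refine ae_neBot.2 ?_
    intro hzero
    have : volume (Ioo (3*T/4) T) = 0 := by
      rw [← Measure.restrict_apply_self, hzero]; simp
    rw [Real.volume_Ioo] at this
    rw [ENNReal.ofReal_eq_zero] at this
    linarith
  obtain ⟨t, ht1, ht2⟩ := (hallk.and hfin').exists
  haveI hne2 : (ae (volume.restrict (ball z σ) : Measure (RN N))).NeBot := by
    refine ae_neBot.2 ?_
    intro hzero
    have : volume (ball z σ) = 0 := by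
      rw [← Measure.restrict_apply_self, hzero]; simp
    exact absurd this (measure_ball_pos volume z hσpos).ne'
  have hy' : ∀ᵐ y ∂(volume.restrict (ball z σ)),
      (∀ k, ENNReal.ofReal (c k * W) ≤ u t y) ∧ u t y < ∞ :=
    (ae_all_iff.2 ht1).and (ae_restrict_of_ae ht2)
  obtain ⟨y, hy1, hy2⟩ := hy'.exists
  -- blow-up of c k
  have hp1 : 1 < pc N := pc_gt_one hN
  have hr1 : 1 < rc N := rc_gt_one hN
  have hrp : rc N < pc N := rc_lt_pc hN
  have hrec : ∀ k, Real.exp (-(Jc N α * (rc N)^k)) * (c k)^(pc N) ≤ c (k+1) := by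
    intro k
    show _ ≤ Dc N α * (qc N α)^k * Real.exp (-(rho0c N α * (rc N)^k)) * (c k)^(pc N)
    exact mul_le_mul_of_nonneg_right (rec_bound hN hα k)
      (Real.rpow_nonneg (hcpos k).le _)
  have hbig : Jc N α/(pc N - rc N) + 1 ≤ Real.log (c 0) := by
    have hc0 : c 0 = D0c N α * M := rfl
    have hD0 := D0c_pos hN hα
    have h1 : Real.exp (Jc N α/(pc N - rc N) + 1) < c 0 := by
      rw [hc0]
      have : Real.exp (Jc N α/(pc N - rc N) + 1) = D0c N α * Thetac N α := by
        rw [Thetac]; field_simp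
      rw [this]
      exact mul_lt_mul_of_pos_left hΘM hD0
    rw [← Real.exp_le_exp, Real.exp_log (hcpos 0)]
    exact h1.le
  obtain ⟨-, hdiv⟩ := div_lemma hr1 hrp (Jc_nonneg hN hα) (hcpos 0) hrec hbig
  -- contradiction with finiteness at (t,y)
  have hFW : ∀ k, c k * W ≤ (u t y).toReal := by
    intro k
    exact (ENNReal.ofReal_le_iff_le_toReal hy2.ne).1 (hy1 k)
  set F := (u t y).toReal with hF
  have hFpos : 0 < F/W := by
    have := lt_of_lt_of_le (mul_pos (hcpos 0) hW) (hFW 0)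
    positivity
  obtain ⟨k, hk⟩ := pow_unbounded_of_one_lt (Real.log (F/W)) hp1
  have hck : F/W < c k := by
    calc F/W = Real.exp (Real.log (F/W)) := (Real.exp_log hFpos).symm
    _ < Real.exp ((pc N)^k) := Real.exp_lt_exp.2 hk
    _ ≤ c k := hdiv k
  have : c k * W ≤ F := hFW k
  rw [div_lt_iff₀ hW] at hck
  linarith

theorem necessary_condition_critical'
    (N : ℕ) (hN : 1 ≤ N) (α : ℝ) (hα : α ∈ Ioo (0 : ℝ) 1) :
    ∃ γ₁' : ℝ, 0 < γ₁' ∧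
      ∀ h : ℝ → ℝ, IsAdmissibleDensity α h →
      ∀ μ : Measure (RN N), IsLocallyFiniteMeasure μ →
      ∀ T : ℝ, 0 < T →
      ∀ u : ℝ → RN N → ℝ≥0∞, IsSolution N α (1 + 2 / (N : ℝ)) h μ T u →
      ∀ σ ∈ Ioc (0 : ℝ) (T ^ (α / 2)), ∀ z : RN N,
        μ (ball z σ) ≤ ENNReal.ofReal
          (γ₁' * (∫ t in (σ ^ (2 / α) / (16 * T))..(1 / 4 : ℝ), t ^ (-α)) ^ (-(N : ℝ) / 2)) := by
  have h1α : (0:ℝ) < 1 - α := by linarith [hα.2]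
  set Imax : ℝ := ((1/4:ℝ))^(1-α)/(1-α) with hImaxdef
  have hImaxpos : 0 < Imax :=
    div_pos (Real.rpow_pos_of_pos (by norm_num) _) h1α
  refine ⟨(max (Thetac N α) 1) * Imax^((N:ℝ)/2),
    mul_pos (lt_of_lt_of_le one_pos (le_max_right _ _))
      (Real.rpow_pos_of_pos hImaxpos _), ?_⟩
  intro h H μ hloc T hT u husol σ' hσ' z
  haveI := hloc
  have hkey := key_bound hN hα H hT μ z husol
  have hmono : μ (ball z σ') ≤ μ (ball z (T^(α/2))) :=
    measure_mono (ball_subset_ball hσ'.2)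
  refine le_trans (le_trans hmono hkey) (ENNReal.ofReal_le_ofReal ?_)
  set a := σ'^(2/α)/(16*T) with hadef
  have ha0 : 0 < a := div_pos (Real.rpow_pos_of_pos hσ'.1 _) (by linarith)
  have haT : a ≤ 1/16 := by
    have h1 : σ'^(2/α) ≤ (T^(α/2))^(2/α) :=
      Real.rpow_le_rpow hσ'.1.le hσ'.2 (div_nonneg (by norm_num) hα.1.le)
    have h2 : (T^(α/2))^(2/α) = T := by
      rw [← Real.rpow_mul hT.le, show (α/2)*(2/α) = 1 by
        rw [div_mul_div_comm, mul_comm α 2]; exact div_self (mul_pos two_pos hα.1).ne',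
        Real.rpow_one]
    rw [hadef, div_le_iff₀ (by linarith : (0:ℝ) < 16*T)]
    rw [h2] at h1
    linarith
  have ha4 : a < 1/4 := lt_of_le_of_lt haT (by norm_num)
  set I : ℝ := ∫ t in a..(1/4:ℝ), t^(-α) with hIdef
  have hIeq : I = ((1/4:ℝ)^(1-α) - a^(1-α))/(1-α) := by
    rw [hIdef, integral_rpow (Or.inl (by linarith : (-1:ℝ) < -α))]
    rw [show -α+1 = 1-α by ring]
  have hIpos : 0 < I := by
    rw [hIeq]
    refine div_pos (sub_pos.2 ?_) h1α
    exact Real.rpow_lt_rpow ha0.le ha4 h1α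
  have hIle : I ≤ Imax := by
    rw [hIeq, hImaxdef]
    refine div_le_div_of_nonneg_right ?_ h1α.le
    have : 0 ≤ a^(1-α) := Real.rpow_nonneg ha0.le _
    linarith
  rw [show -(N:ℝ)/2 = -((N:ℝ)/2) by ring]
  have hstep1 : Imax^(-((N:ℝ)/2)) ≤ I^(-((N:ℝ)/2)) :=
    rpow_neg_anti hIpos hIle (by positivity)
  have he : Imax^((N:ℝ)/2) * Imax^(-((N:ℝ)/2)) = 1 := by
    rw [← Real.rpow_add hImaxpos, show (N:ℝ)/2 + -((N:ℝ)/2) = 0 by ring, Real.rpow_zero]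
  have hmax0 : (0:ℝ) ≤ max (Thetac N α) 1 := le_trans zero_le_one (le_max_right _ _)
  calc Thetac N α ≤ max (Thetac N α) 1 := le_max_left _ _
  _ = max (Thetac N α) 1 * (Imax^((N:ℝ)/2) * Imax^(-((N:ℝ)/2))) := by rw [he, mul_one]
  _ ≤ max (Thetac N α) 1 * (Imax^((N:ℝ)/2) * I^(-((N:ℝ)/2))) := by
      refine mul_le_mul_of_nonneg_left ?_ hmax0
      exact mul_le_mul_of_nonneg_left hstep1 (Real.rpow_nonneg hImaxpos.le _)
  _ = max (Thetac N α) 1 * Imax^((N:ℝ)/2) * I^(-((N:ℝ)/2)) := by ring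


/-- necessary condition in the doubly critical case `p = p_F = 1 + 2/N`
(Theorem 1.1, second part). -/
theorem necessary_condition_critical
    (N : ℕ) (hN : 1 ≤ N) (α : ℝ) (hα : α ∈ Ioo (0 : ℝ) 1) :
    ∃ γ₁' : ℝ, 0 < γ₁' ∧
      ∀ h : ℝ → ℝ, IsAdmissibleDensity α h →
      ∀ μ : Measure (RN N), IsLocallyFiniteMeasure μ →
      ∀ T : ℝ, 0 < T →
      ∀ u : ℝ → RN N → ℝ≥0∞, IsSolution N α (1 + 2 / (N : ℝ)) h μ T u →
      ∀ σ ∈ Ioc (0 : ℝ) (T ^ (α / 2)), ∀ z : RN N,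
        μ (ball z σ) ≤ ENNReal.ofReal
          (γ₁' * (∫ t in (σ ^ (2 / α) / (16 * T))..(1 / 4 : ℝ), t ^ (-α)) ^ (-(N : ℝ) / 2)) := by
  exact necessary_condition_critical' N hN α hα
end
end
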